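/- arXiv:2106.04118 — 5 statements merged into one kernel-verified Lean document; each statement's English description precedes it below -/
import Mathlib

section
/- Fix an environment e and an observed variable index j ∈ {1,...,p}. Assume either (i) the set of unobserved parents of Y is empty (Pa_C(Y) = ∅), or (ii) X^e_j is conditionally independent of C^e_{Pa_C(Y)} given X^e_{-j}. Then, if the sharp causal null hypothesis H^causal_j is true, the conditional independence null hypothesis H^{ci,e}_j is true. -/
open MeasureTheory ProbabilityTheory


private lemma indic_inter_mul {α : Type*} (q E : Set α) :
    (Set.indicator (q ∩ E) (fun _ => (1 : ℝ))) =
      (Set.indicator q fun _ => (1 : ℝ)) * Set.indicator E fun _ => (1 : ℝ) := by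
  funext ω
  by_cases hq : ω ∈ q <;> by_cases hE : ω ∈ E <;>
    simp [Set.indicator, hq, hE, Set.mem_inter_iff]

/-- If `D` is independent of the σ-algebra `m''`, `E ∈ m''` and `m' ≤ m''`, then
`μ⟦E ∩ D | m'⟧ = μ(D) • μ⟦E | m'⟧`. -/
private lemma condexp_indicator_inter_indep {Ω : Type*}
    {m' m'' mD : MeasurableSpace Ω} [mΩ : MeasurableSpace Ω] [StandardBorelSpace Ω]
    {μ : Measure Ω} [IsProbabilityMeasure μ]
    (hm'' : m'' ≤ mΩ) (hmD : mD ≤ mΩ) (hm' : m' ≤ mΩ) (hm'm'' : m' ≤ m'')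
    {E D : Set Ω} (hE : MeasurableSet[m''] E) (hD : MeasurableSet[mD] D)
    (hindep : Indep mD m'' μ) :
    (μ⟦E ∩ D | m'⟧) =ᵐ[μ] (fun _ => (μ D).toReal) * μ⟦E | m'⟧ := by
  have hDm : MeasurableSet[mΩ] D := hmD D hD
  have hEm : MeasurableSet[mΩ] E := hm'' E hE
  have hint : (∫ x, Set.indicator D (fun _ => (1:ℝ)) x ∂μ) = (μ D).toReal := by
    rw [MeasureTheory.integral_indicator hDm, MeasureTheory.setIntegral_const]
    simp
    rfl
  -- conditional expectation on m'' of the indicator of D is constant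
  have h2 : μ[(Set.indicator D fun _ => (1:ℝ)) | m''] =ᵐ[μ] fun _ => (μ D).toReal := by
    have h2' := condExp_indep_eq (μ := μ)
      (f := Set.indicator D fun _ => (1:ℝ)) hmD hm''
      (stronglyMeasurable_const.indicator hD) hindep
    rw [hint] at h2'
    exact h2'
  -- pull out the m''-measurable indicator of E
  have h3 : (μ⟦E ∩ D | m''⟧) =ᵐ[μ]
      (Set.indicator E fun _ => (1:ℝ)) * fun _ => (μ D).toReal := by
    rw [indic_inter_mul E D]
    refine (condExp_mul_of_stronglyMeasurable_left (stronglyMeasurable_const.indicator hE) ?_ ?_).trans ?_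
    · rw [← indic_inter_mul E D]
      exact (integrable_const (1 : ℝ)).indicator (hEm.inter hDm)
    · exact (integrable_const (1 : ℝ)).indicator hDm
    · exact Filter.EventuallyEq.mul Filter.EventuallyEq.rfl h2
  have h4 : (Set.indicator E fun _ => (1:ℝ)) * (fun _ => (μ D).toReal)
      = (μ D).toReal • Set.indicator E fun _ => (1:ℝ) := by
    funext ω; simp [mul_comm]
  -- tower property
  calc μ⟦E ∩ D | m'⟧
      =ᵐ[μ] μ[(μ⟦E ∩ D | m''⟧) | m'] := (condExp_condExp_of_le hm'm'' hm'').symm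
    _ =ᵐ[μ] μ[((μ D).toReal • Set.indicator E fun _ => (1:ℝ)) | m'] := by
        refine condExp_congr_ae ?_
        exact h3.trans (by rw [h4])
    _ =ᵐ[μ] (μ D).toReal • (μ⟦E | m'⟧) := condExp_smul _ _ _
    _ = (fun _ => (μ D).toReal) * μ⟦E | m'⟧ := by funext ω; simp


section Aux

open MeasurableSpace

variable {Ω : Type*} {m' : MeasurableSpace Ω} [mΩ : MeasurableSpace Ω] [StandardBorelSpace Ω]
  {hm' : m' ≤ mΩ} {μ : Measure Ω} [IsProbabilityMeasure μ]

/-- Pull-out: conditional expectation of the indicator of `q ∩ E` given `m'`,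
for `q` an `m'`-measurable set. -/
private lemma condexp_indicator_inter_of_meas' (hm' : m' ≤ mΩ)
    {q E : Set Ω} (hq : MeasurableSet[m'] q) (hE : MeasurableSet E) :
    (μ⟦q ∩ E | m'⟧) =ᵐ[μ] (Set.indicator q fun _ => (1 : ℝ)) * μ⟦E | m'⟧ := by
  rw [indic_inter_mul q E]
  refine condExp_mul_of_stronglyMeasurable_left
    (stronglyMeasurable_const.indicator hq) ?_ ?_
  · rw [← indic_inter_mul q E]
    exact (integrable_const (1 : ℝ)).indicator ((hm' q hq).inter hE)
  · exact (integrable_const (1 : ℝ)).indicator hE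

/-- A random variable is conditionally independent of any variable valued in a
subsingleton space. -/
lemma condIndepFun_of_subsingleton_right
    {β γ : Type*} [mβ : MeasurableSpace β] [mγ : MeasurableSpace γ] [Subsingleton γ]
    (hm' : m' ≤ mΩ) {f : Ω → β} {g : Ω → γ} (hf : Measurable f) (hg : Measurable g) :
    CondIndepFun m' hm' f g μ := by
  rw [condIndepFun_iff _ _ _ _ hf hg]
  rintro t1 _ ht1 ⟨u, hu, rfl⟩
  by_cases hne : ∃ y : γ, y ∈ u
  · obtain ⟨y, hy⟩ := hne
    have hgu : g ⁻¹' u = Set.univ :=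
      Set.eq_univ_of_forall fun ω => by
        show g ω ∈ u
        rwa [Subsingleton.elim (g ω) y]
    rw [hgu, Set.inter_univ, Set.indicator_univ, condExp_const (μ := μ) hm' (1:ℝ)]
    filter_upwards with ω
    simp
  · push_neg at hne
    have hgu : g ⁻¹' u = (∅ : Set Ω) := by
      ext ω; simp [hne]
    rw [hgu, Set.inter_empty, Set.indicator_empty, condExp_const (μ := μ) hm' (0:ℝ)]
    filter_upwards with ω
    simp

/-- If `f ⫫ g ∣ m'` and `φ` is `m'`-measurable, then `f ⫫ (φ, g) ∣ m'`. -/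
lemma CondIndepFun.prod_mk_meas_left
    {β γ δ : Type*} [mβ : MeasurableSpace β] [mγ : MeasurableSpace γ] [mδ : MeasurableSpace δ]
    (hm' : m' ≤ mΩ) {f : Ω → β} {g : Ω → γ} {φ : Ω → δ}
    (hf : Measurable f) (hg : Measurable g) (hφ' : Measurable[m'] φ)
    (h : CondIndepFun m' hm' f g μ) :
    CondIndepFun m' hm' f (fun ω => (φ ω, g ω)) μ := by
  have hφ : Measurable φ := hφ'.mono hm' le_rfl
  have hF : Measurable (fun ω => (φ ω, g ω)) := hφ.prodMk hg
  rw [condIndepFun_iff_condIndep]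
  have hrect := @generateFrom_prod δ γ mδ mγ
  refine CondIndepSets.condIndep
    (p1 := {s | ∃ t ∈ { t : Set β | MeasurableSet t }, f ⁻¹' t = s})
    (p2 := {s | ∃ t ∈ Set.image2 (· ×ˢ ·) { s : Set δ | MeasurableSet s }
      { t : Set γ | MeasurableSet t }, (fun ω => (φ ω, g ω)) ⁻¹' t = s})
    hf.comap_le hF.comap_le (isPiSystem_measurableSet.comap _)
    (isPiSystem_prod.comap _) ?_ ?_ ?_
  · conv_lhs => rw [← @generateFrom_measurableSet β mβ]
    rw [MeasurableSpace.comap_generateFrom]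
    rfl
  · rw [← hrect, MeasurableSpace.comap_generateFrom]
    rfl
  · rw [condIndepSets_iff _ _ _ _ ?_ ?_]
    rotate_left
    · rintro _ ⟨t, ht, rfl⟩
      exact hf ht
    · rintro _ ⟨t, ht, rfl⟩
      exact hF (hrect ▸ measurableSet_generateFrom ht)
    rintro _ _ ⟨t0, ht0, rfl⟩ ⟨_, ⟨u, hu, w, hw, rfl⟩, rfl⟩
    have hpre : (fun ω => (φ ω, g ω)) ⁻¹' (u ×ˢ w) = φ ⁻¹' u ∩ g ⁻¹' w := by
      ext ω; simp [Set.mem_prod]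
    have hsm : MeasurableSet (f ⁻¹' t0) := hf ht0
    have hgw : MeasurableSet (g ⁻¹' w) := hg hw
    have hq : MeasurableSet[m'] (φ ⁻¹' u) := hφ' hu
    have hrw1 : f ⁻¹' t0 ∩ (fun ω => (φ ω, g ω)) ⁻¹' (u ×ˢ w)
        = φ ⁻¹' u ∩ (f ⁻¹' t0 ∩ g ⁻¹' w) := by
      rw [hpre]; ext ω; simp; tauto
    rw [hrw1, hpre]
    have h1 := condexp_indicator_inter_of_meas' (μ := μ) hm' hq (hsm.inter hgw)
    have h2 := condexp_indicator_inter_of_meas' (μ := μ) hm' hq hgw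
    have h3 : (μ⟦f ⁻¹' t0 ∩ g ⁻¹' w | m'⟧) =ᵐ[μ] (μ⟦f ⁻¹' t0 | m'⟧) * μ⟦g ⁻¹' w | m'⟧ :=
      (condIndepFun_iff _ _ f g hf hg μ).mp h (f ⁻¹' t0) (g ⁻¹' w) ⟨t0, ht0, rfl⟩ ⟨w, hw, rfl⟩
    filter_upwards [h1, h2, h3] with ω e1 e2 e3
    simp only [Pi.mul_apply] at e1 e2 e3 ⊢
    rw [e1, e2, e3]
    ring

/-- If `f ⫫ g ∣ m'`, `v ⫫ (g, f)`, and `m' ≤ σ(g, f)`, then `f ⫫ (g, v) ∣ m'`. -/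
lemma CondIndepFun.prod_mk_indep_right
    {β γ δ : Type*} [mβ : MeasurableSpace β] [mγ : MeasurableSpace γ] [mδ : MeasurableSpace δ]
    (hm' : m' ≤ mΩ) {f : Ω → β} {g : Ω → γ} {v : Ω → δ}
    (hf : Measurable f) (hg : Measurable g) (hv : Measurable v)
    (hm'le : m' ≤ MeasurableSpace.comap (fun ω => (g ω, f ω)) inferInstance)
    (hindep : IndepFun v (fun ω => (g ω, f ω)) μ)
    (h : CondIndepFun m' hm' f g μ) :
    CondIndepFun m' hm' f (fun ω => (g ω, v ω)) μ := by
  have hgf : Measurable (fun ω => (g ω, f ω)) := hg.prodMk hf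
  have hm'' : MeasurableSpace.comap (fun ω => (g ω, f ω))
      (inferInstance : MeasurableSpace (γ × β)) ≤ mΩ := hgf.comap_le
  have hIndep' : Indep (mδ.comap v)
      (MeasurableSpace.comap (fun ω => (g ω, f ω)) inferInstance) μ := hindep
  have hfm'' : mβ.comap f ≤ MeasurableSpace.comap (fun ω => (g ω, f ω))
      (inferInstance : MeasurableSpace (γ × β)) := by
    rintro _ ⟨t, ht, rfl⟩
    exact ⟨Prod.snd ⁻¹' t, measurable_snd ht, rfl⟩
  have hgm'' : mγ.comap g ≤ MeasurableSpace.comap (fun ω => (g ω, f ω))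
      (inferInstance : MeasurableSpace (γ × β)) := by
    rintro _ ⟨t, ht, rfl⟩
    exact ⟨Prod.fst ⁻¹' t, measurable_fst ht, rfl⟩
  have hF : Measurable (fun ω => (g ω, v ω)) := hg.prodMk hv
  rw [condIndepFun_iff_condIndep]
  have hrect := @generateFrom_prod γ δ mγ mδ
  refine CondIndepSets.condIndep
    (p1 := {s | ∃ t ∈ { t : Set β | MeasurableSet t }, f ⁻¹' t = s})
    (p2 := {s | ∃ t ∈ Set.image2 (· ×ˢ ·) { s : Set γ | MeasurableSet s }
      { t : Set δ | MeasurableSet t }, (fun ω => (g ω, v ω)) ⁻¹' t = s})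
    hf.comap_le hF.comap_le (isPiSystem_measurableSet.comap _)
    (isPiSystem_prod.comap _) ?_ ?_ ?_
  · conv_lhs => rw [← @generateFrom_measurableSet β mβ]
    rw [MeasurableSpace.comap_generateFrom]
    rfl
  · rw [← hrect, MeasurableSpace.comap_generateFrom]
    rfl
  · rw [condIndepSets_iff _ _ _ _ ?_ ?_]
    rotate_left
    · rintro _ ⟨t, ht, rfl⟩
      exact hf ht
    · rintro _ ⟨t, ht, rfl⟩
      exact hF (hrect ▸ measurableSet_generateFrom ht)
    rintro _ _ ⟨t0, ht0, rfl⟩ ⟨_, ⟨u, hu, w, hw, rfl⟩, rfl⟩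
    have hpre : (fun ω => (g ω, v ω)) ⁻¹' (u ×ˢ w) = g ⁻¹' u ∩ v ⁻¹' w := by
      ext ω; simp [Set.mem_prod]
    have hrw1 : f ⁻¹' t0 ∩ (fun ω => (g ω, v ω)) ⁻¹' (u ×ˢ w)
        = (f ⁻¹' t0 ∩ g ⁻¹' u) ∩ v ⁻¹' w := by
      rw [hpre]; ext ω; simp; tauto
    rw [hrw1, hpre]
    have hE1 : MeasurableSet[MeasurableSpace.comap (fun ω => (g ω, f ω))
        (inferInstance : MeasurableSpace (γ × β))] (f ⁻¹' t0 ∩ g ⁻¹' u) :=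
      MeasurableSet.inter (hfm'' _ ⟨t0, ht0, rfl⟩) (hgm'' _ ⟨u, hu, rfl⟩)
    have hE2 : MeasurableSet[MeasurableSpace.comap (fun ω => (g ω, f ω))
        (inferInstance : MeasurableSpace (γ × β))] (g ⁻¹' u) := hgm'' _ ⟨u, hu, rfl⟩
    have hDm : MeasurableSet[mδ.comap v] (v ⁻¹' w) := ⟨w, hw, rfl⟩
    have h1 := condexp_indicator_inter_indep (μ := μ) hm'' hv.comap_le hm' hm'le hE1 hDm hIndep'
    have h2 := condexp_indicator_inter_indep (μ := μ) hm'' hv.comap_le hm' hm'le hE2 hDm hIndep'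
    have h3 : (μ⟦f ⁻¹' t0 ∩ g ⁻¹' u | m'⟧) =ᵐ[μ] (μ⟦f ⁻¹' t0 | m'⟧) * μ⟦g ⁻¹' u | m'⟧ :=
      (condIndepFun_iff _ _ f g hf hg μ).mp h (f ⁻¹' t0) (g ⁻¹' u) ⟨t0, ht0, rfl⟩ ⟨u, hu, rfl⟩
    filter_upwards [h1, h2, h3] with ω e1 e2 e3
    simp only [Pi.mul_apply] at e1 e2 e3 ⊢
    rw [e1, e2, e3]
    ring

/-- Symmetry of conditional independence for functions with different codomains. -/
lemma CondIndepFun.symm' {β γ : Type*} [mβ : MeasurableSpace β] [mγ : MeasurableSpace γ]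
    {hm' : m' ≤ mΩ} {f : Ω → β} {g : Ω → γ}
    (h : CondIndepFun m' hm' f g μ) : CondIndepFun m' hm' g f μ :=
  Kernel.IndepFun.symm h

end Aux

/-- Changing coordinates outside `S` does not change `F`, provided each single
coordinate outside `S` does not. -/
lemma eq_of_agree_on_set {pc : ℕ} {α : Type*} (F : (Fin pc → ℝ) → α) (S : Set (Fin pc))
    (hnull : ∀ k ∉ S, ∀ c c' : Fin pc → ℝ, (∀ i, i ≠ k → c i = c' i) → F c = F c')
    {c c' : Fin pc → ℝ} (hcc : ∀ k ∈ S, c k = c' k) : F c = F c' := by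
  classical
  suffices H : ∀ s : Finset (Fin pc), ∀ c c' : Fin pc → ℝ, (∀ k ∈ S, c k = c' k) →
      (∀ k, k ∉ s → c k = c' k) → F c = F c' by
    exact H Finset.univ c c' hcc (fun k hk => absurd (Finset.mem_univ k) hk)
  intro s
  induction s using Finset.induction_on with
  | empty =>
    intro c c' _ h
    exact congrArg F (funext fun k => h k (Finset.notMem_empty k))
  | @insert a s ha IH =>
    intro c c' hS h
    by_cases haS : a ∈ S
    · refine IH c c' hS (fun k hk => ?_)
      by_cases hka : k = a
      · subst hka; exact hS k haS
      · exact h k (by simp [Finset.mem_insert, hka] at hk ⊢; exact fun hks => hk hks)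
    · set c'' := Function.update c a (c' a) with hc''
      have h1 : F c = F c'' :=
        hnull a haS c c'' (fun i hia => by simp [hc'', Function.update_of_ne hia])
      have h2 : F c'' = F c' := by
        refine IH c'' c' (fun k hk => ?_) (fun k hk => ?_)
        · have hka : k ≠ a := fun hka => haS (hka ▸ hk)
          rw [hc'', Function.update_of_ne hka]
          exact hS k hk
        · by_cases hka : k = a
          · subst hka; rw [hc'', Function.update_self]
          · rw [hc'', Function.update_of_ne hka]
            exact h k (by simp [Finset.mem_insert, hka]; exact fun hks => hk hks)
      rw [h1, h2]

open Classical in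
/-- Extension of a vector indexed by `{i // i ≠ j}` to a full vector, padding with `0`. -/
noncomputable def padObs {p : ℕ} (j : Fin p) (xm : {i : Fin p // i ≠ j} → ℝ) : Fin p → ℝ :=
  fun i => if h : i = j then 0 else xm ⟨i, h⟩

open Classical in
/-- Extension of a vector indexed by `S` to a full vector, padding with `0`. -/
noncomputable def padHid {pc : ℕ} (S : Set (Fin pc)) (cp : S → ℝ) : Fin pc → ℝ :=
  fun k => if h : k ∈ S then cp ⟨k, h⟩ else 0

lemma measurable_padObs {p : ℕ} (j : Fin p) : Measurable (padObs j) :=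
  measurable_pi_lambda _ fun i => by
    by_cases h : i = j
    · simpa [padObs, h] using measurable_const
    · simpa [padObs, h] using measurable_pi_apply (⟨i, h⟩ : {i : Fin p // i ≠ j})

lemma measurable_padHid {pc : ℕ} (S : Set (Fin pc)) : Measurable (padHid S) :=
  measurable_pi_lambda _ fun k => by
    by_cases h : k ∈ S
    · simpa [padHid, h] using measurable_pi_apply (⟨k, h⟩ : S)
    · simpa [padHid, h] using measurable_const

/--
**Proposition 1: conditional testing yields causal inference without confounding.**
Setting: `p` observed variables `X`, `pc` unobserved variables `C`, exogenous noise `V`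
independent of `(X, C)`, and outcome `Y = f̄(X, C, V)` generated by a structural equation
model (in a fixed environment `e`, encoded by the probability measure `μ`).
`PaC` is the set of unobserved parents of `Y`: indices `k` for which the sharp causal null
for `C_k` fails.  Assume either (i) `PaC = ∅`, or (ii) `X_j` is conditionally independent
of `C_{PaC}` given `X_{-j}`.  Then the sharp causal null hypothesis `H^causal_j`
(changing the `j`-th observed coordinate never changes `f̄`) implies the conditional
independence null hypothesis `H^{ci,e}_j : Y ⫫ X_j ∣ X_{-j}`.
-/
theorem causal_null_implies_ci_null
    {Ω : Type*} [MeasurableSpace Ω] [StandardBorelSpace Ω] [Nonempty Ω]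
    (μ : Measure Ω) [IsProbabilityMeasure μ]
    (p pc : ℕ) (j : Fin p)
    (X : Fin p → Ω → ℝ) (C : Fin pc → Ω → ℝ) (V : Ω → ℝ)
    (hX : ∀ i, Measurable (X i)) (hC : ∀ k, Measurable (C k)) (hV : Measurable V)
    (fbar : (Fin p → ℝ) → (Fin pc → ℝ) → ℝ → ℝ) (hfbar : Measurable fun q : (Fin p → ℝ) × (Fin pc → ℝ) × ℝ => fbar q.1 q.2.1 q.2.2)
    -- the structural equation model: Y = f̄(Z, V) with Z = (X, C)
    (Y : Ω → ℝ) (hY : ∀ ω, Y ω = fbar (fun i => X i ω) (fun k => C k ω) (V ω))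
    -- the exogenous noise V is independent of the explanatory variables Z = (X, C)
    (hVindep : IndepFun (fun ω => ((fun i => X i ω, fun k => C k ω) : (Fin p → ℝ) × (Fin pc → ℝ))) V μ)
    -- PaC : the set of unobserved parents of Y
    (PaC : Set (Fin pc))
    (hPaC : PaC = {k | ¬ ∀ (x : Fin p → ℝ) (c c' : Fin pc → ℝ) (v : ℝ),
        (∀ i, i ≠ k → c i = c' i) → fbar x c v = fbar x c' v})
    -- assume (i) no unobserved causal variables, or (ii) X_j ⫫ C_{PaC} ∣ X_{-j}
    (hnoconf : PaC = ∅ ∨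
      CondIndepFun
        (MeasurableSpace.comap (fun ω => fun i : {i : Fin p // i ≠ j} => X i ω) inferInstance)
        ((measurable_pi_lambda _ fun i : {i : Fin p // i ≠ j} => hX i).comap_le)
        (X j) (fun ω => fun k : PaC => C k ω) μ)
    -- the sharp causal null hypothesis H^causal_j for the observed variable j
    (hcausal : ∀ (x x' : Fin p → ℝ) (c : Fin pc → ℝ) (v : ℝ),
        (∀ i, i ≠ j → x i = x' i) → fbar x c v = fbar x' c v) :
    -- conclusion: the conditional independence null H^{ci,e}_j : Y ⫫ X_j ∣ X_{-j}
    CondIndepFun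
      (MeasurableSpace.comap (fun ω => fun i : {i : Fin p // i ≠ j} => X i ω) inferInstance)
      ((measurable_pi_lambda _ fun i : {i : Fin p // i ≠ j} => hX i).comap_le)
      Y (X j) μ := by
  classical
  have hXm : Measurable (fun ω => fun i : {i : Fin p // i ≠ j} => X i ω) :=
    measurable_pi_lambda _ fun i => hX i
  have hCp : Measurable (fun ω => fun k : PaC => C k ω) :=
    measurable_pi_lambda _ fun k => hC k
  -- Step 1: X j ⫫ C_PaC ∣ X_{-j}
  have hcc : CondIndepFun
      (MeasurableSpace.comap (fun ω => fun i : {i : Fin p // i ≠ j} => X i ω) inferInstance)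
      ((measurable_pi_lambda _ fun i : {i : Fin p // i ≠ j} => hX i).comap_le)
      (X j) (fun ω => fun k : PaC => C k ω) μ := by
    rcases hnoconf with h0 | h
    · haveI : IsEmpty (↥PaC) := by rw [h0]; infer_instance
      haveI : Subsingleton (↥PaC → ℝ) := ⟨fun a b => funext fun k => isEmptyElim k⟩
      exact condIndepFun_of_subsingleton_right _ (hX j) hCp
    · exact h
  -- Step 2: X j ⫫ (X_{-j}, C_PaC) ∣ X_{-j}
  have hXW : CondIndepFun
      (MeasurableSpace.comap (fun ω => fun i : {i : Fin p // i ≠ j} => X i ω) inferInstance)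
      ((measurable_pi_lambda _ fun i : {i : Fin p // i ≠ j} => hX i).comap_le)
      (X j) (fun ω => ((fun i : {i : Fin p // i ≠ j} => X i ω), (fun k : PaC => C k ω))) μ :=
    CondIndepFun.prod_mk_meas_left _ (hX j) hCp (fun _ ht => ⟨_, ht, rfl⟩) hcc
  -- Step 3: X j ⫫ ((X_{-j}, C_PaC), V) ∣ X_{-j}
  have hXT : CondIndepFun
      (MeasurableSpace.comap (fun ω => fun i : {i : Fin p // i ≠ j} => X i ω) inferInstance)
      ((measurable_pi_lambda _ fun i : {i : Fin p // i ≠ j} => hX i).comap_le)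
      (X j) (fun ω => ((((fun i : {i : Fin p // i ≠ j} => X i ω),
        (fun k : PaC => C k ω))), V ω)) μ := by
    refine CondIndepFun.prod_mk_indep_right _ (hX j) (hXm.prodMk hCp) hV ?_ ?_ hXW
    · rintro _ ⟨t, ht, rfl⟩
      refine ⟨(fun q : (({i : Fin p // i ≠ j} → ℝ) × (↥PaC → ℝ)) × ℝ => q.1.1) ⁻¹' t,
        measurable_fst.fst ht, rfl⟩
    · have hΦ : Measurable (fun z : (Fin p → ℝ) × (Fin pc → ℝ) =>
          ((((fun i : {i : Fin p // i ≠ j} => z.1 i), (fun k : PaC => z.2 k))), z.1 j)) := by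
        refine Measurable.prodMk (Measurable.prodMk ?_ ?_) ?_
        · exact measurable_pi_lambda _ fun i => (measurable_pi_apply _).comp measurable_fst
        · exact measurable_pi_lambda _ fun k => (measurable_pi_apply _).comp measurable_snd
        · exact (measurable_pi_apply j).comp measurable_fst
      exact (hVindep.comp hΦ measurable_id).symm
  -- Step 4: factorization of Y through ((X_{-j}, C_PaC), V)
  have hnull : ∀ k, k ∉ PaC → ∀ (x : Fin p → ℝ) (c c' : Fin pc → ℝ) (v : ℝ),
      (∀ i, i ≠ k → c i = c' i) → fbar x c v = fbar x c' v := by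
    intro k hk
    rw [hPaC] at hk
    simp only [Set.mem_setOf_eq, not_not] at hk
    exact hk
  have hfact : ∀ ω, Y ω = fbar (padObs j (fun i : {i : Fin p // i ≠ j} => X i ω))
      (padHid PaC (fun k : PaC => C k ω)) (V ω) := by
    intro ω
    rw [hY ω]
    have h1 : fbar (fun i => X i ω) (fun k => C k ω) (V ω)
        = fbar (padObs j (fun i : {i : Fin p // i ≠ j} => X i ω)) (fun k => C k ω) (V ω) :=
      hcausal _ _ _ _ (fun i hij => by simp [padObs, hij])
    have h2 : fbar (padObs j (fun i : {i : Fin p // i ≠ j} => X i ω)) (fun k => C k ω) (V ω)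
        = fbar (padObs j (fun i : {i : Fin p // i ≠ j} => X i ω))
            (padHid PaC (fun k : PaC => C k ω)) (V ω) :=
      eq_of_agree_on_set
        (fun c => fbar (padObs j (fun i : {i : Fin p // i ≠ j} => X i ω)) c (V ω)) PaC
        (fun k hk c c' hcc' => hnull k hk _ c c' _ hcc')
        (fun k hk => by simp [padHid, hk])
    exact h1.trans h2
  have hg : Measurable (fun q : (({i : Fin p // i ≠ j} → ℝ) × (↥PaC → ℝ)) × ℝ =>
      fbar (padObs j q.1.1) (padHid PaC q.1.2) q.2) := by
    have hmap : Measurable (fun q : (({i : Fin p // i ≠ j} → ℝ) × (↥PaC → ℝ)) × ℝ =>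
        ((padObs j q.1.1, (padHid PaC q.1.2, q.2)) : (Fin p → ℝ) × (Fin pc → ℝ) × ℝ)) :=
      ((measurable_padObs j).comp measurable_fst.fst).prodMk
        (((measurable_padHid PaC).comp measurable_fst.snd).prodMk measurable_snd)
    exact hfbar.comp hmap
  have hYfun : Y = (fun q : (({i : Fin p // i ≠ j} → ℝ) × (↥PaC → ℝ)) × ℝ =>
      fbar (padObs j q.1.1) (padHid PaC q.1.2) q.2)
      ∘ (fun ω => ((((fun i : {i : Fin p // i ≠ j} => X i ω),
        (fun k : PaC => C k ω))), V ω)) := funext fun ω => hfact ω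
  rw [hYfun]
  exact CondIndepFun.comp (μ := μ) (ψ := (id : ℝ → ℝ))
    (φ := fun q : (({i : Fin p // i ≠ j} → ℝ) × (↥PaC → ℝ)) × ℝ =>
      fbar (padObs j q.1.1) (padHid PaC q.1.2) q.2)
    (CondIndepFun.symm' hXT) hg measurable_id
end

section
/- Fix an observed variable index j ∈ {1,...,p} and consider E environments. Suppose there are no unmeasured variables (p_c = 0), so Z = X, and in each environment e the data are collected through a biased sampling mechanism in which a random individual is included with probability proportional to φ^e(Z_{S^e}, Y), for some subset S^e ⊆ {1,...,p} and nonnegative function φ^e, so that the effective joint distribution in environment e is P^e(Z,Y) ∝ P_Z^e(Z) · P*(Y | Z) · φ^e(Z_{S^e}, Y), where P*(Y | Z) is the conditional distribution of the outcome determined by the causal model. If there exists an environment e ∈ {1,...,E} with j ∉ S^e, then the sharp causal null hypothesis H^causal_j implies the consistent conditional independence null hypothesis H^cst_j, where each H^{ci,e}_j in the definition of H^cst_j refers to the effective (biased) population of environment e. -/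
open MeasureTheory ProbabilityTheory
open scoped ENNReal

/-- σ-algebra generated by the coordinates other than `j` (of the first component). -/
def mCoordAux (p : ℕ) (j : Fin p) : MeasurableSpace ((Fin p → ℝ) × ℝ) :=
  MeasurableSpace.comap
    (fun q : (Fin p → ℝ) × ℝ => fun i : {i : Fin p // i ≠ j} => q.1 i) inferInstance

/-- σ-algebra generated by the full first component. -/
def mFstAux (p : ℕ) : MeasurableSpace ((Fin p → ℝ) × ℝ) :=
  MeasurableSpace.comap Prod.fst inferInstance

/--
**Proposition 3: consistency improves robustness to sampling biases.**
There are `E` environments and `p` explanatory variables `Z = X`, all observed, with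
outcome generated by the constant structural equation model `Y = f̄(Z, V)`, `V ~ νV`
independent of `Z ~ ν e` in environment `e`.  In environment `e` the data are collected
through a biased sampling mechanism: a random draw is included with probability
proportional to `φ e (Z_{S e}, Y)` (the bias `φ e` depends on `Z` only through the
coordinates in `S e`, and possibly on `Y`), so that the effective joint distribution of
`(Z, Y)` in environment `e` is
`μ e ∝ (ideal joint of (Z, Y)) ⋅ φ e(Z_{S e}, Y)` — i.e. `P^e(Z,Y) ∝ P_Z^e(Z) P*(Y|Z) φ^e(Z_{S^e},Y)`.
If some environment `e` satisfies `j ∉ S e`, then the sharp causal null `H^causal_j`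
implies the consistent conditional independence null `H^cst_j`, where each `H^{ci,e}_j`
refers to the effective (biased) population `μ e`.
-/
theorem causal_null_implies_consistent_ci_null_biased_sampling
    (E p : ℕ) (j : Fin p)
    -- population distribution of the explanatory variables in each environment
    (ν : Fin E → Measure (Fin p → ℝ)) (hν : ∀ e, IsProbabilityMeasure (ν e))
    -- distribution of the exogenous noise V, constant across environments
    (νV : Measure ℝ) [IsProbabilityMeasure νV]
    -- the constant structural equation model Y = f̄(Z, V)
    (fbar : (Fin p → ℝ) → ℝ → ℝ)
    (hfbar : Measurable fun q : (Fin p → ℝ) × ℝ => fbar q.1 q.2)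
    -- the sampling-bias functions φ^e and the subsets S^e of variables they depend on
    (S : Fin E → Set (Fin p))
    (φ : Fin E → (Fin p → ℝ) → ℝ → ℝ≥0∞)
    (hφ : ∀ e, Measurable fun q : (Fin p → ℝ) × ℝ => φ e q.1 q.2)
    (hφS : ∀ e (z z' : Fin p → ℝ) (y : ℝ), (∀ i ∈ S e, z i = z' i) → φ e z y = φ e z' y)
    -- the effective (biased) joint distribution of (Z, Y) in each environment:
    -- μ e ∝ (pushforward of (ν e) ⊗ νV under (z, v) ↦ (z, f̄(z, v))) weighted by φ e
    (μ : Fin E → Measure ((Fin p → ℝ) × ℝ))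
    [hμprob : ∀ e, IsProbabilityMeasure (μ e)]
    (hbias : ∀ e, ∃ c : ℝ≥0∞, c ≠ 0 ∧ c ≠ ⊤ ∧
      μ e = c • (Measure.withDensity
        (Measure.map (fun q : (Fin p → ℝ) × ℝ => (q.1, fbar q.1 q.2)) ((ν e).prod νV))
        (fun q => φ e q.1 q.2)))
    -- some environment does not bias the sampling through variable j
    (hj : ∃ e : Fin E, j ∉ S e)
    -- the sharp causal null hypothesis H^causal_j
    (hcausal : ∀ (z z' : Fin p → ℝ) (v : ℝ),
        (∀ i, i ≠ j → z i = z' i) → fbar z v = fbar z' v) :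
    -- conclusion: H^cst_j for the effective populations, i.e. there is an environment in
    -- which Y ⫫ Z_j ∣ Z_{-j} under the biased distribution μ e
    ∃ e : Fin E, CondIndepFun
      (MeasurableSpace.comap
        (fun q : (Fin p → ℝ) × ℝ => fun i : {i : Fin p // i ≠ j} => q.1 i) inferInstance)
      ((measurable_pi_lambda _ fun i : {i : Fin p // i ≠ j} =>
          (measurable_pi_apply (i : Fin p)).comp measurable_fst).comap_le)
      (fun q : (Fin p → ℝ) × ℝ => q.2) (fun q : (Fin p → ℝ) × ℝ => q.1 j) (μ e) := by
  classical
  obtain ⟨e, hjS⟩ := hj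
  haveI := hμprob e
  haveI := hν e
  obtain ⟨c, hc0, hcT, hμeq⟩ := hbias e
  refine ⟨e, ?_⟩
  -- projections and embeddings
  have hπ : Measurable (fun z : Fin p → ℝ => (fun i : {i : Fin p // i ≠ j} => z (i : Fin p))) :=
    measurable_pi_lambda _ fun i => measurable_pi_apply _
  set emb : ({i : Fin p // i ≠ j} → ℝ) → (Fin p → ℝ) :=
    fun u i => if h : i = j then 0 else u ⟨i, h⟩ with hembdef
  have hemb : Measurable emb := by
    refine measurable_pi_lambda _ fun i => ?_
    by_cases h : i = j
    · simp only [hembdef, dif_pos h]; exact measurable_const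
    · simp only [hembdef, dif_neg h]; exact measurable_pi_apply _
  set π : (Fin p → ℝ) → ({i : Fin p // i ≠ j} → ℝ) :=
    fun z i => z (i : Fin p) with hπdef
  have hfb : ∀ (z : Fin p → ℝ) (v : ℝ), fbar z v = fbar (emb (π z)) v := fun z v =>
    hcausal z _ v fun i hij => by simp [hembdef, hπdef, hij]
  have hφz : ∀ (z : Fin p → ℝ) (y : ℝ), φ e z y = φ e (emb (π z)) y := fun z y =>
    hφS e z _ y fun i hi => by
      have hij : i ≠ j := fun h => hjS (h ▸ hi)
      simp [hembdef, hπdef, hij]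
  set F : ({i : Fin p // i ≠ j} → ℝ) → ℝ → ℝ := fun u v => fbar (emb u) v with hFdef
  set ψ : ({i : Fin p // i ≠ j} → ℝ) → ℝ → ℝ≥0∞ := fun u v => φ e (emb u) (F u v) with hψdef
  have hF : Measurable fun q : ({i : Fin p // i ≠ j} → ℝ) × ℝ => F q.1 q.2 :=
    hfbar.comp ((hemb.comp measurable_fst).prodMk measurable_snd)
  have hψ : Measurable fun q : ({i : Fin p // i ≠ j} → ℝ) × ℝ => ψ q.1 q.2 :=
    (hφ e).comp ((hemb.comp measurable_fst).prodMk hF)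
  set Ψ : ({i : Fin p // i ≠ j} → ℝ) → ℝ≥0∞ := fun u => ∫⁻ v, ψ u v ∂νV with hΨdef
  have hΨ : Measurable Ψ := Measurable.lintegral_prod_right hψ
  -- the map T
  set T : (Fin p → ℝ) × ℝ → (Fin p → ℝ) × ℝ := fun q => (q.1, fbar q.1 q.2) with hTdef
  have hT : Measurable T := measurable_fst.prodMk hfbar
  -- the bias density as a function of (π z, v)
  have hwT : ∀ (z : Fin p → ℝ) (v : ℝ), φ e z (fbar z v) = ψ (π z) v := by
    intro z v
    rw [hfb z v, hφz z _]
  -- master formula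
  have M : ∀ (H : (Fin p → ℝ) × ℝ → ℝ≥0∞), Measurable H →
      ∫⁻ q, H q ∂(μ e) = c * ∫⁻ z, ∫⁻ v, H (z, fbar z v) * ψ (π z) v ∂νV ∂(ν e) := by
    intro H hH
    rw [hμeq, lintegral_smul_measure,
      lintegral_withDensity_eq_lintegral_mul _ (hφ e) hH]
    simp only [Pi.mul_apply, smul_eq_mul]
    rw [lintegral_map (f := fun a => φ e a.1 a.2 * H a) ((hφ e).mul hH) hT]
    have hmeas : AEMeasurable (fun a : (Fin p → ℝ) × ℝ => φ e (T a).1 (T a).2 * H (T a))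
        ((ν e).prod νV) := (((hφ e).mul hH).comp hT).aemeasurable
    rw [lintegral_prod _ hmeas]
    congr 1
    refine lintegral_congr fun z => lintegral_congr fun v => ?_
    show φ e z (fbar z v) * H (z, fbar z v) = H (z, fbar z v) * ψ (π z) v
    rw [mul_comm, hwT]
  -- total mass finiteness
  have h1 : (1 : ℝ≥0∞) = c * ∫⁻ z, Ψ (π z) ∂(ν e) := by
    have := M (fun _ => 1) measurable_const
    simpa using this
  have hνtot : ∫⁻ z, Ψ (π z) ∂(ν e) ≠ ⊤ := by
    intro htop
    rw [htop, ENNReal.mul_top hc0] at h1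
    exact ENNReal.one_ne_top h1
  have hΨπ : Measurable fun z => Ψ (π z) := hΨ.comp hπ
  have hΨae : ∀ᵐ z ∂(ν e), Ψ (π z) < ⊤ := ae_lt_top hΨπ hνtot
  -- the two σ-algebras
  have hm_le_mZ : mCoordAux p j ≤ mFstAux p := by
    rintro _ ⟨t, ht, rfl⟩
    exact ⟨π ⁻¹' t, hπ ht, rfl⟩
  have hmZ_le : mFstAux p ≤ Prod.instMeasurableSpace :=
    measurable_fst.comap_le
  have hm_le0 : mCoordAux p j ≤ Prod.instMeasurableSpace := hm_le_mZ.trans hmZ_le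
  haveI hfin1 : SigmaFinite ((μ e).trim hmZ_le) := by
    haveI := isFiniteMeasure_trim (μ := μ e) hmZ_le; infer_instance
  haveI hfin2 : SigmaFinite ((μ e).trim hm_le0) := by
    haveI := isFiniteMeasure_trim (μ := μ e) hm_le0; infer_instance
  -- key: conditional expectations of Y-events agree for mZ and m
  have key : ∀ s : Set ℝ, MeasurableSet s →
      (μ e)[Set.indicator ((fun q : (Fin p → ℝ) × ℝ => q.2) ⁻¹' s) (fun _ => (1:ℝ))|mFstAux p]
        =ᵐ[μ e]
      (μ e)[Set.indicator ((fun q : (Fin p → ℝ) × ℝ => q.2) ⁻¹' s) (fun _ => (1:ℝ))|mCoordAux p j] := by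
    intro s hs
    set A : Set ((Fin p → ℝ) × ℝ) := (fun q : (Fin p → ℝ) × ℝ => q.2) ⁻¹' s with hAdef
    have hA : MeasurableSet A := measurable_snd hs
    set Θ : ({i : Fin p // i ≠ j} → ℝ) → ℝ≥0∞ :=
      fun u => ∫⁻ v, s.indicator (fun _ => (1:ℝ≥0∞)) (F u v) * ψ u v ∂νV with hΘdef
    have hΘmeas : Measurable Θ :=
      Measurable.lintegral_prod_right (((measurable_const.indicator hs).comp hF).mul hψ)
    have hψu : Measurable (Function.uncurry ψ) := hψ
    have hΘleΨ : ∀ u, Θ u ≤ Ψ u := by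
      intro u
      refine lintegral_mono fun v => ?_
      by_cases hv : F u v ∈ s
      · simp [Set.indicator_of_mem hv]
      · simp [Set.indicator_of_notMem hv]
    set G : (Fin p → ℝ) × ℝ → ℝ≥0∞ := fun q => Θ (π q.1) / Ψ (π q.1) with hGdef
    have hGmeas : Measurable G :=
      (hΘmeas.comp (hπ.comp measurable_fst)).div (hΨ.comp (hπ.comp measurable_fst))
    have hG1 : ∀ q, G q ≤ 1 := fun q =>
      ENNReal.div_le_of_le_mul (by rw [one_mul]; exact hΘleΨ _)
    -- main lintegral identity
    have L : ∀ D : Set (Fin p → ℝ), MeasurableSet D →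
        ∫⁻ q in Prod.fst ⁻¹' D, G q ∂(μ e) = μ e (A ∩ Prod.fst ⁻¹' D) := by
      intro D hD
      have hC : MeasurableSet (Prod.fst ⁻¹' D : Set ((Fin p → ℝ) × ℝ)) := measurable_fst hD
      rw [← lintegral_indicator hC, ← lintegral_indicator_one (hA.inter hC),
        M ((Prod.fst ⁻¹' D).indicator G) (hGmeas.indicator hC),
        M ((A ∩ Prod.fst ⁻¹' D).indicator (1 : (Fin p → ℝ) × ℝ → ℝ≥0∞))
          (measurable_one.indicator (hA.inter hC))]
      congr 1
      refine lintegral_congr_ae ?_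
      filter_upwards [hΨae] with z hz
      by_cases hzD : z ∈ D
      · have hL1 : ∀ v : ℝ, (Prod.fst ⁻¹' D).indicator G (z, fbar z v) = Θ (π z) / Ψ (π z) :=
          fun v => Set.indicator_of_mem (by exact hzD) _
        have hL2 : ∀ v : ℝ, (A ∩ Prod.fst ⁻¹' D).indicator
              (1 : (Fin p → ℝ) × ℝ → ℝ≥0∞) (z, fbar z v)
            = s.indicator (fun _ => (1:ℝ≥0∞)) (F (π z) v) := by
          intro v
          have hFv : F (π z) v = fbar z v := (hfb z v).symm
          by_cases hv : fbar z v ∈ s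
          · have hmA : (z, fbar z v) ∈ A := hv
            have hmemAD : (z, fbar z v) ∈ A ∩ Prod.fst ⁻¹' D := ⟨hmA, hzD⟩
            rw [Set.indicator_of_mem hmemAD, hFv, Set.indicator_of_mem hv]
            rfl
          · rw [Set.indicator_of_notMem (fun hmem => hv hmem.1), hFv,
              Set.indicator_of_notMem hv]
        calc ∫⁻ v, (Prod.fst ⁻¹' D).indicator G (z, fbar z v) * ψ (π z) v ∂νV
            = ∫⁻ v, (Θ (π z) / Ψ (π z)) * ψ (π z) v ∂νV :=
              lintegral_congr fun v => by rw [hL1]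
          _ = (Θ (π z) / Ψ (π z)) * Ψ (π z) :=
              lintegral_const_mul _ hψu.of_uncurry_left
          _ = Θ (π z) := by
              rcases eq_or_ne (Ψ (π z)) 0 with h0 | h0
              · have hΘ0 : Θ (π z) = 0 := le_antisymm (h0 ▸ hΘleΨ (π z)) zero_le
                rw [h0, mul_zero, hΘ0]
              · exact ENNReal.div_mul_cancel h0 hz.ne
          _ = ∫⁻ v, (A ∩ Prod.fst ⁻¹' D).indicator (1 : (Fin p → ℝ) × ℝ → ℝ≥0∞) (z, fbar z v)
                * ψ (π z) v ∂νV :=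
              (lintegral_congr fun v => by rw [hL2]).symm
      · have hL1 : ∀ v : ℝ, (Prod.fst ⁻¹' D).indicator G (z, fbar z v) = 0 :=
          fun v => Set.indicator_of_notMem (by exact hzD) _
        have hL2 : ∀ v : ℝ,
            (A ∩ Prod.fst ⁻¹' D).indicator (1 : (Fin p → ℝ) × ℝ → ℝ≥0∞) (z, fbar z v) = 0 :=
          fun v => Set.indicator_of_notMem (fun hmem => hzD hmem.2) _
        simp only [hL1, hL2, zero_mul, lintegral_zero]
    -- the common version g of both conditional expectations
    set g : (Fin p → ℝ) × ℝ → ℝ := fun q => (G q).toReal with hgdef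
    have hgmeas0 : Measurable g := ENNReal.measurable_toReal.comp hGmeas
    have hgm : Measurable[mCoordAux p j] g := by
      have hp1 : Measurable[mCoordAux p j]
          (fun q : (Fin p → ℝ) × ℝ => fun i : {i : Fin p // i ≠ j} => q.1 i) :=
        fun t ht => ⟨t, ht, rfl⟩
      exact (ENNReal.measurable_toReal.comp (hΘmeas.div hΨ)).comp hp1
    have hgmZ : Measurable[mFstAux p] g := hgm.mono hm_le_mZ le_rfl
    have hgint : Integrable g (μ e) := by
      refine (integrable_const (1:ℝ)).mono' hgmeas0.aestronglyMeasurable (ae_of_all _ fun q => ?_)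
      rw [Real.norm_eq_abs, abs_of_nonneg ENNReal.toReal_nonneg]
      calc (G q).toReal ≤ (1:ℝ≥0∞).toReal := ENNReal.toReal_mono ENNReal.one_ne_top (hG1 q)
        _ = 1 := by simp
    have hAint : Integrable (A.indicator fun _ => (1:ℝ)) (μ e) :=
      (integrable_const 1).indicator hA
    have hsetint : ∀ C : Set ((Fin p → ℝ) × ℝ), MeasurableSet[mFstAux p] C →
        ∫ x in C, g x ∂(μ e) = ∫ x in C, A.indicator (fun _ => (1:ℝ)) x ∂(μ e) := by
      rintro _ ⟨D, hD, rfl⟩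
      have hC : MeasurableSet (Prod.fst ⁻¹' D : Set ((Fin p → ℝ) × ℝ)) := measurable_fst hD
      rw [integral_indicator_const (1:ℝ) hA, measureReal_def, Measure.restrict_apply hA, smul_eq_mul, mul_one]
      have hint : ∫ x in Prod.fst ⁻¹' D, g x ∂(μ e)
          = (∫⁻ x in Prod.fst ⁻¹' D, G x ∂(μ e)).toReal :=
        integral_toReal hGmeas.aemeasurable.restrict
          (ae_of_all _ fun q => lt_of_le_of_lt (hG1 q) ENNReal.one_lt_top)
      rw [hint, L D hD]
    have hsm1 : AEStronglyMeasurable[mFstAux p] g (μ e) :=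
      hgmZ.stronglyMeasurable.aestronglyMeasurable
    have hsm2 : AEStronglyMeasurable[mCoordAux p j] g (μ e) :=
      hgm.stronglyMeasurable.aestronglyMeasurable
    have hK1 : g =ᵐ[μ e] (μ e)[A.indicator (fun _ => (1:ℝ))|mFstAux p] :=
      ae_eq_condExp_of_forall_setIntegral_eq hmZ_le hAint
        (fun C _ _ => hgint.integrableOn) (fun C hC _ => hsetint C hC) hsm1
    have hK2 : g =ᵐ[μ e] (μ e)[A.indicator (fun _ => (1:ℝ))|mCoordAux p j] :=
      ae_eq_condExp_of_forall_setIntegral_eq hm_le0 hAint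
        (fun C _ _ => hgint.integrableOn) (fun C hC _ => hsetint C (hm_le_mZ C hC)) hsm2
    exact hK1.symm.trans hK2
  -- assemble: conditional independence via the key identity
  rw [condIndepFun_iff_condExp_inter_preimage_eq_mul
    (show Measurable fun q : (Fin p → ℝ) × ℝ => q.2 from measurable_snd)
    (show Measurable fun q : (Fin p → ℝ) × ℝ => q.1 j from
      (measurable_pi_apply j).comp measurable_fst)]
  intro s t hs ht
  set A : Set ((Fin p → ℝ) × ℝ) := (fun q : (Fin p → ℝ) × ℝ => q.2) ⁻¹' s with hAdef
  set B : Set ((Fin p → ℝ) × ℝ) := (fun q : (Fin p → ℝ) × ℝ => q.1 j) ⁻¹' t with hBdef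
  have hA : MeasurableSet A := measurable_snd hs
  have hB : MeasurableSet B := ((measurable_pi_apply j).comp measurable_fst) ht
  have hBmZ : MeasurableSet[mFstAux p] B :=
    ⟨(fun z : Fin p → ℝ => z j) ⁻¹' t, measurable_pi_apply j ht, rfl⟩
  have hmul : Set.indicator (A ∩ B) (fun _ => (1:ℝ)) =
      Set.indicator B (fun _ => (1:ℝ)) * Set.indicator A (fun _ => (1:ℝ)) := by
    funext ω
    by_cases h1 : ω ∈ A <;> by_cases h2 : ω ∈ B <;>
      simp [Set.indicator_apply, h1, h2, Set.mem_inter_iff]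
  have hBsm : StronglyMeasurable[mFstAux p] (Set.indicator B fun _ => (1:ℝ)) :=
    (stronglyMeasurable_const :
      StronglyMeasurable[mFstAux p] fun _ : (Fin p → ℝ) × ℝ => (1:ℝ)).indicator hBmZ
  have hintA : Integrable (Set.indicator A fun _ => (1:ℝ)) (μ e) :=
    (integrable_const 1).indicator hA
  have hintB : Integrable (Set.indicator B fun _ => (1:ℝ)) (μ e) :=
    (integrable_const 1).indicator hB
  have hintBA : Integrable
      (Set.indicator B (fun _ => (1:ℝ)) * Set.indicator A fun _ => (1:ℝ)) (μ e) := by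
    rw [← hmul]; exact (integrable_const 1).indicator (hA.inter hB)
  have hpull1 : (μ e)[Set.indicator B (fun _ => (1:ℝ)) *
        Set.indicator A (fun _ => (1:ℝ))|mFstAux p]
      =ᵐ[μ e] Set.indicator B (fun _ => (1:ℝ)) *
        (μ e)[Set.indicator A (fun _ => (1:ℝ))|mFstAux p] :=
    condExp_mul_of_stronglyMeasurable_left hBsm hintBA hintA
  have hKey := key s hs
  have hh : (μ e)[Set.indicator (A ∩ B) (fun _ => (1:ℝ))|mFstAux p]
      =ᵐ[μ e] Set.indicator B (fun _ => (1:ℝ)) *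
        (μ e)[Set.indicator A (fun _ => (1:ℝ))|mCoordAux p j] := by
    rw [hmul]
    exact hpull1.trans (Filter.EventuallyEq.mul (Filter.EventuallyEq.refl _ _) hKey)
  have tower : (μ e)[Set.indicator (A ∩ B) (fun _ => (1:ℝ))|mCoordAux p j]
      =ᵐ[μ e] (μ e)[(μ e)[Set.indicator (A ∩ B) (fun _ => (1:ℝ))|mFstAux p]|mCoordAux p j] :=
    (condExp_condExp_of_le hm_le_mZ hmZ_le).symm
  have hintmix : Integrable ((μ e)[Set.indicator A (fun _ => (1:ℝ))|mCoordAux p j] *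
      Set.indicator B fun _ => (1:ℝ)) (μ e) := by
    have h1 : Integrable (fun ω => Set.indicator B (fun _ => (1:ℝ)) ω *
        ((μ e)[Set.indicator A (fun _ => (1:ℝ))|mCoordAux p j]) ω) (μ e) := by
      refine Integrable.bdd_mul (c := 1) integrable_condExp hintB.aestronglyMeasurable
        (ae_of_all _ fun ω => ?_)
      by_cases hω : ω ∈ B <;> simp [Set.indicator_apply, hω]
    exact h1.congr (ae_of_all _ fun ω => mul_comm _ _)
  have hpull2 : (μ e)[(μ e)[Set.indicator A (fun _ => (1:ℝ))|mCoordAux p j] *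
        Set.indicator B (fun _ => (1:ℝ))|mCoordAux p j]
      =ᵐ[μ e] (μ e)[Set.indicator A (fun _ => (1:ℝ))|mCoordAux p j] *
        (μ e)[Set.indicator B (fun _ => (1:ℝ))|mCoordAux p j] :=
    condExp_mul_of_stronglyMeasurable_left stronglyMeasurable_condExp hintmix hintB
  have hfinal : (μ e)[Set.indicator (A ∩ B) (fun _ => (1:ℝ))|mCoordAux p j]
      =ᵐ[μ e] (μ e)[Set.indicator A (fun _ => (1:ℝ))|mCoordAux p j] *
        (μ e)[Set.indicator B (fun _ => (1:ℝ))|mCoordAux p j] :=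
    calc (μ e)[Set.indicator (A ∩ B) (fun _ => (1:ℝ))|mCoordAux p j]
      =ᵐ[μ e] (μ e)[(μ e)[Set.indicator (A ∩ B) (fun _ => (1:ℝ))|mFstAux p]|mCoordAux p j] :=
        tower
    _ =ᵐ[μ e] (μ e)[(μ e)[Set.indicator A (fun _ => (1:ℝ))|mCoordAux p j] *
          Set.indicator B (fun _ => (1:ℝ))|mCoordAux p j] := by
        refine condExp_congr_ae (hh.trans ?_)
        rw [mul_comm]
    _ =ᵐ[μ e] (μ e)[Set.indicator A (fun _ => (1:ℝ))|mCoordAux p j] *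
          (μ e)[Set.indicator B (fun _ => (1:ℝ))|mCoordAux p j] := hpull2
  exact hfinal
end

section
/- Suppose the multi-environment statistics W ∈ R^{E×p} are computed as W^e_j = T^e_j − T̃^e_j from importance measures constructed in two stages: (1) a prior weight vector π ∈ R^p is computed as a measurable function of (Y, [X, X̃]_swap(V)), where V ∈ {0,1}^{En×p} is a matrix of i.i.d. fair coin flips independent of everything else, and [X, X̃]_swap(V) is obtained by swapping the i-th observation of X_j with the corresponding knockoff if and only if V_{ij} = 1; (2) given π, the importance measures (T^e, T̃^e) in each environment e are computed from the unperturbed data of environment e by a procedure that is equivariant under swapping any variable with its knockoff (swapping X_j with X̃_j in environment e swaps T^e_j with T̃^e_j, leaving all other outputs unchanged in distribution) and whose tuning (cross-validation errors and selected penalty parameters) is invariant to such swaps. Assume the knockoffs are valid as in Proposition 4. Then W is a matrix of valid multi-environment knockoff statistics, i.e., W satisfies Definition 1; the key fact is that for any fixed swap set S the composition of swap(S) with the random swap(V) has the same distribution as swap(V), so the joint distribution of the prior weights is invariant under swap(S). -/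
open MeasureTheory ProbabilityTheory
open scoped ENNReal

/-- Swap, for every pair `(e, j)` in `S`, the column of variable `j` in environment `e`
with the corresponding knockoff column (data are stored as variable/knockoff pairs). -/
def swapCols {E n p : ℕ} (S : Finset (Fin E × Fin p))
    (A : Fin E → Fin n → Fin p → ℝ × ℝ) : Fin E → Fin n → Fin p → ℝ × ℝ :=
  fun e i j => if (e, j) ∈ S then Prod.swap (A e i j) else A e i j

/-- Swap, for every pair `(e, j)` in `S`, the importance measure `T^e_j` with the
corresponding knockoff importance measure `T̃^e_j`. -/
def swapStats {E p : ℕ} (S : Finset (Fin E × Fin p))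
    (T : Fin E → Fin p → ℝ × ℝ) : Fin E → Fin p → ℝ × ℝ :=
  fun e j => if (e, j) ∈ S then Prod.swap (T e j) else T e j

/-- Swap variable/knockoff columns according to a (random) sign pattern `s`:
entry `(e, j)` is swapped if and only if `s e j < 0`. -/
noncomputable def swapColsSign {E n p : ℕ} (s : Fin E → Fin p → ℝ)
    (A : Fin E → Fin n → Fin p → ℝ × ℝ) : Fin E → Fin n → Fin p → ℝ × ℝ :=
  fun e i j => if s e j < 0 then Prod.swap (A e i j) else A e i j

/-- Swap each variable observation with its own knockoff according to the
observation-by-observation coin flips `v`: the `i`-th observation of variable `j` in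
environment `e` is swapped with its knockoff if and only if `v e i j = true`. -/
def swapObsCoins {E n p : ℕ} (v : Fin E → Fin n → Fin p → Bool)
    (A : Fin E → Fin n → Fin p → ℝ × ℝ) : Fin E → Fin n → Fin p → ℝ × ℝ :=
  fun e i j => if v e i j then Prod.swap (A e i j) else A e i j

/-- **Definition 1: valid multi-environment knockoff statistics.** -/
def IsValidMEKS {Ω : Type*} [MeasurableSpace Ω] (μ : Measure Ω) {E p : ℕ}
    (null : Fin E → Fin p → Prop) (W : Ω → Fin E → Fin p → ℝ) : Prop :=
  ∃ ε : Ω → Fin E → Fin p → ℝ,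
    Measurable ε ∧
    (∀ ω e j, ε ω e j = 1 ∨ ε ω e j = -1) ∧
    iIndepFun
      (fun ej : Fin E × Fin p => fun ω => ε ω ej.1 ej.2) μ ∧
    IndepFun ε W μ ∧
    (∀ e j, null e j →
      μ {ω | ε ω e j = 1} = 1/2 ∧ μ {ω | ε ω e j = -1} = 1/2) ∧
    (∀ e j, ¬ null e j → ∀ᵐ ω ∂μ, ε ω e j = 1) ∧
    Measure.map W μ = Measure.map (fun ω => fun e j => W ω e j * ε ω e j) μ

section Helpers

variable {E n p : ℕ}

/-- Flip coin matrices according to a fixed pattern `b`. -/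
def bflip (b v : Fin E → Fin n → Fin p → Bool) : Fin E → Fin n → Fin p → Bool :=
  fun e i j => if b e i j then !(v e i j) else v e i j

/-- measurable triple evaluation -/
lemma Measurable.eval3 {δ η : Type*} {α β γ : Type*} [MeasurableSpace δ] [MeasurableSpace η]
    {f : δ → α → β → γ → η} (hf : Measurable f) (a : α) (b : β) (c : γ) :
    Measurable fun x => f x a b c :=
  (measurable_pi_apply c).comp ((measurable_pi_apply b).comp ((measurable_pi_apply a).comp hf))

lemma Measurable.eval2' {δ η : Type*} {α β : Type*} [MeasurableSpace δ] [MeasurableSpace η]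
    {f : δ → α → β → η} (hf : Measurable f) (a : α) (b : β) :
    Measurable fun x => f x a b :=
  (measurable_pi_apply b).comp ((measurable_pi_apply a).comp hf)

lemma bflip_invol (b v : Fin E → Fin n → Fin p → Bool) : bflip b (bflip b v) = v := by
  funext e i j; by_cases h : b e i j <;> simp [bflip, h]

lemma measurable_bflip (b : Fin E → Fin n → Fin p → Bool) : Measurable (bflip b) := by
  refine measurable_pi_lambda _ fun e => measurable_pi_lambda _ fun i =>
    measurable_pi_lambda _ fun j => ?_
  by_cases h : b e i j <;> simp only [bflip, h, if_true, if_false]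
  · exact (Measurable.of_discrete (f := Bool.not)).comp (Measurable.eval3 measurable_id e i j)
  · exact Measurable.eval3 measurable_id e i j

lemma bflip_preimage_singleton (b x : Fin E → Fin n → Fin p → Bool) :
    bflip b ⁻¹' {x} = {bflip b x} := by
  ext v
  simp only [Set.mem_preimage, Set.mem_singleton_iff]
  constructor
  · intro h; rw [← h, bflip_invol]
  · intro h; rw [h, bflip_invol]

/-- Two measures on a countable measurable-singleton space agreeing on singletons agree. -/
lemma measure_ext_of_singleton {α : Type*} [MeasurableSpace α] [Countable α]
    [MeasurableSingletonClass α] {μ ν : Measure α} (h : ∀ x, μ {x} = ν {x}) : μ = ν := by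
  ext s hs
  have key : ∀ κ : Measure α, κ s = ∑' b : s, κ {(b : α)} := by
    intro κ
    have := tsum_measure_preimage_singleton (μ := κ) (s.to_countable) (f := id)
      (fun y _ => measurableSet_singleton y)
    simpa using this.symm
  rw [key μ, key ν]
  exact tsum_congr fun b => h b

end Helpers

/--
**Proposition 5: the empirical cross-prior statistics are valid multi-environment
knockoff statistics.**  Stage 1: a prior weight vector `π ∈ ℝ^p` is computed as a
measurable function `g` of `(Y, [X, X̃]_swap(V))`, where `V` is a matrix of i.i.d. fair
coin flips (one per observation and variable) independent of everything else, and
`[X, X̃]_swap(V)` swaps the `i`-th observation of `X_j` with its knockoff iff `V_{ij}=1`.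
Stage 2: given the prior `π`, the importance measures `(T, T̃) = F(π, Y, [X, X̃])` are
computed from the unperturbed data by a procedure `F` that is equivariant under swapping
any variable with its knockoff (swapping `X_j` with `X̃_j` in environment `e` swaps
`T^e_j` with `T̃^e_j` and leaves all other outputs unchanged — in particular the
cross-validation tuning is invariant to such swaps).  Assuming the knockoffs are valid
(as in Proposition 4, relative to a Definition-1 random sign pattern `ε` independent of
everything else), the statistics `W^e_j = T^e_j − T̃^e_j` satisfy Definition 1.
-/
theorem cross_prior_stats_are_valid_MEKS
    {Ω : Type*} [MeasurableSpace Ω] (μ : Measure Ω) [IsProbabilityMeasure μ]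
    (n E p : ℕ)
    (Y : Ω → Fin E → Fin n → ℝ) (hY : Measurable Y)
    (XX : Ω → Fin E → Fin n → Fin p → ℝ × ℝ) (hXX : Measurable XX)
    (null : Fin E → Fin p → Prop)
    -- Stage 1: the matrix V of i.i.d. fair coin flips, independent of everything else
    (V : Ω → Fin E → Fin n → Fin p → Bool) (hVmeas : Measurable V)
    (hViid : iIndepFun
      (fun q : Fin E × Fin n × Fin p => fun ω => V ω q.1 q.2.1 q.2.2) μ)
    (hVfair : ∀ e i j, μ {ω | V ω e i j = true} = 1/2)
    -- the prior weights π = g(Y, [X, X̃]_swap(V))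
    (g : (Fin E → Fin n → ℝ) → (Fin E → Fin n → Fin p → ℝ × ℝ) → Fin p → ℝ)
    (hg : Measurable fun q : (Fin E → Fin n → ℝ) × (Fin E → Fin n → Fin p → ℝ × ℝ) =>
      g q.1 q.2)
    (π : Ω → Fin p → ℝ)
    (hπ : ∀ ω, π ω = g (Y ω) (swapObsCoins (V ω) (XX ω)))
    -- Stage 2: the environment-wise importance measures F(π, Y, ·), computed from the
    -- unperturbed data, equivariant under swaps of variables with their knockoffs
    (F : (Fin p → ℝ) → (Fin E → Fin n → ℝ) → (Fin E → Fin n → Fin p → ℝ × ℝ) →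
      Fin E → Fin p → ℝ × ℝ)
    (hF : Measurable fun q :
        (Fin p → ℝ) × (Fin E → Fin n → ℝ) × (Fin E → Fin n → Fin p → ℝ × ℝ) =>
      F q.1 q.2.1 q.2.2)
    (hFequiv : ∀ (pr : Fin p → ℝ) (y : Fin E → Fin n → ℝ)
        (d : Fin E → Fin n → Fin p → ℝ × ℝ) (S : Finset (Fin E × Fin p)),
      F pr y (swapCols S d) = swapStats S (F pr y d))
    -- a Definition-1 sign pattern ε, independent of everything else
    (ε : Ω → Fin E → Fin p → ℝ) (hεmeas : Measurable ε)
    (hεsign : ∀ ω e j, ε ω e j = 1 ∨ ε ω e j = -1)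
    (hεindep : iIndepFun
      (fun ej : Fin E × Fin p => fun ω => ε ω ej.1 ej.2) μ)
    (hεnull : ∀ e j, null e j →
      μ {ω | ε ω e j = 1} = 1/2 ∧ μ {ω | ε ω e j = -1} = 1/2)
    (hεnonnull : ∀ e j, ¬ null e j → ∀ᵐ ω ∂μ, ε ω e j = 1)
    -- V and ε are independent of everything else (jointly)
    (hVindep : IndepFun V (fun ω => (Y ω, XX ω, ε ω)) μ)
    (hεdata : IndepFun ε (fun ω => (Y ω, XX ω, V ω)) μ)
    -- knockoff validity (as in Proposition 4): swapping null variables with their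
    -- knockoffs according to the random sign pattern ε preserves the joint law with Y
    (hknock : Measure.map (fun ω => (Y ω, swapColsSign (ε ω) (XX ω))) μ
      = Measure.map (fun ω => (Y ω, XX ω)) μ)
    -- the statistics W^e_j = T^e_j − T̃^e_j from the cross-prior importance measures
    (W : Ω → Fin E → Fin p → ℝ)
    (hW : ∀ ω e j, W ω e j
      = (F (π ω) (Y ω) (XX ω) e j).1 - (F (π ω) (Y ω) (XX ω) e j).2) :
    IsValidMEKS μ null W := by
  classical
  -- notation
  set Z : Ω → (Fin E → Fin n → ℝ) × (Fin E → Fin n → Fin p → ℝ × ℝ) × (Fin E → Fin p → ℝ) :=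
    fun ω => (Y ω, XX ω, ε ω) with hZdef
  have hZ : Measurable Z := hY.prodMk (hXX.prodMk hεmeas)
  have hYXX : Measurable (fun ω => (Y ω, XX ω)) := hY.prodMk hXX
  -- the statistic-computing map H
  set H : (Fin E → Fin n → ℝ) × (Fin E → Fin n → Fin p → ℝ × ℝ) ×
      (Fin E → Fin n → Fin p → Bool) → Fin E → Fin p → ℝ :=
    fun q => fun e j => (F (g q.1 (swapObsCoins q.2.2 q.2.1)) q.1 q.2.1 e j).1
      - (F (g q.1 (swapObsCoins q.2.2 q.2.1)) q.1 q.2.1 e j).2 with hHdef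
  have mswapObs : Measurable (fun q : (Fin E → Fin n → ℝ) × (Fin E → Fin n → Fin p → ℝ × ℝ) ×
      (Fin E → Fin n → Fin p → Bool) => swapObsCoins q.2.2 q.2.1) := by
    refine measurable_pi_lambda _ fun e => measurable_pi_lambda _ fun i =>
      measurable_pi_lambda _ fun j => ?_
    have hcond : MeasurableSet {q : (Fin E → Fin n → ℝ) × (Fin E → Fin n → Fin p → ℝ × ℝ) ×
        (Fin E → Fin n → Fin p → Bool) | q.2.2 e i j = true} :=
      ((measurable_snd.comp measurable_snd).eval3 e i j) (measurableSet_singleton true)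
    exact Measurable.ite hcond
      (measurable_swap.comp ((measurable_fst.comp measurable_snd).eval3 e i j))
      ((measurable_fst.comp measurable_snd).eval3 e i j)
  have mF' : Measurable (fun q : (Fin E → Fin n → ℝ) × (Fin E → Fin n → Fin p → ℝ × ℝ) ×
      (Fin E → Fin n → Fin p → Bool) =>
      F (g q.1 (swapObsCoins q.2.2 q.2.1)) q.1 q.2.1) :=
    hF.comp (((hg.comp (measurable_fst.prodMk mswapObs))).prodMk
      (measurable_fst.prodMk (measurable_fst.comp measurable_snd)))
  have mH : Measurable H := by
    refine measurable_pi_lambda _ fun e => measurable_pi_lambda _ fun j => ?_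
    exact ((measurable_fst.comp (mF'.eval2' e j)).sub
      (measurable_snd.comp (mF'.eval2' e j)))
  -- W as a function of (Y, XX, V)
  have h9 : W = fun ω => H (Y ω, XX ω, V ω) := by
    funext ω e j
    rw [hW, hπ]
  have hYXXV : Measurable (fun ω => (Y ω, XX ω, V ω)) := hY.prodMk (hXX.prodMk hVmeas)
  -- the swapped data and flipped coins
  set XX'' : Ω → Fin E → Fin n → Fin p → ℝ × ℝ := fun ω => swapColsSign (ε ω) (XX ω)
    with hXX''def
  set V' : Ω → Fin E → Fin n → Fin p → Bool :=
    fun ω => fun e i j => if ε ω e j < 0 then !(V ω e i j) else V ω e i j with hV'def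
  -- the deterministic transformation Θ
  set Θ : (Fin E → Fin n → Fin p → Bool) ×
      ((Fin E → Fin n → ℝ) × (Fin E → Fin n → Fin p → ℝ × ℝ) × (Fin E → Fin p → ℝ)) →
      (Fin E → Fin n → Fin p → Bool) ×
      ((Fin E → Fin n → ℝ) × (Fin E → Fin n → Fin p → ℝ × ℝ)) :=
    fun q => (fun e i j => if q.2.2.2 e j < 0 then !(q.1 e i j) else q.1 e i j,
      (q.2.1, swapColsSign q.2.2.2 q.2.2.1)) with hΘdef
  set c : (Fin E → Fin n → ℝ) × (Fin E → Fin n → Fin p → ℝ × ℝ) × (Fin E → Fin p → ℝ) →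
      (Fin E → Fin n → ℝ) × (Fin E → Fin n → Fin p → ℝ × ℝ) :=
    fun z => (z.1, swapColsSign z.2.2 z.2.1) with hcdef
  have mc : Measurable c := by
    refine measurable_fst.prodMk ?_
    refine measurable_pi_lambda _ fun e => measurable_pi_lambda _ fun i =>
      measurable_pi_lambda _ fun j => ?_
    have hcond : MeasurableSet {z : (Fin E → Fin n → ℝ) × (Fin E → Fin n → Fin p → ℝ × ℝ) ×
        (Fin E → Fin p → ℝ) | z.2.2 e j < 0} :=
      measurableSet_lt ((measurable_snd.comp measurable_snd).eval2' e j) measurable_const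
    exact Measurable.ite hcond
      (measurable_swap.comp ((measurable_fst.comp measurable_snd).eval3 e i j))
      ((measurable_fst.comp measurable_snd).eval3 e i j)
  have mΘ : Measurable Θ := by
    refine Measurable.prodMk ?_ (mc.comp measurable_snd)
    refine measurable_pi_lambda _ fun e => measurable_pi_lambda _ fun i =>
      measurable_pi_lambda _ fun j => ?_
    have hcond : MeasurableSet {q : (Fin E → Fin n → Fin p → Bool) ×
        ((Fin E → Fin n → ℝ) × (Fin E → Fin n → Fin p → ℝ × ℝ) × (Fin E → Fin p → ℝ)) |
        q.2.2.2 e j < 0} :=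
      measurableSet_lt ((measurable_snd.comp (measurable_snd.comp measurable_snd)).eval2' e j)
        measurable_const
    exact Measurable.ite hcond
      ((Measurable.of_discrete (f := Bool.not)).comp (measurable_fst.eval3 e i j))
      (measurable_fst.eval3 e i j)
  have h2 : (fun ω => (V' ω, (Y ω, XX'' ω))) = Θ ∘ (fun ω => (V ω, Z ω)) := rfl
  have hV'YXX''meas : Measurable (fun ω => (V' ω, (Y ω, XX'' ω))) := by
    rw [h2]; exact mΘ.comp (hVmeas.prodMk hZ)
  -- measurability of coordinate evaluations of V
  have hev : ∀ (q : Fin E × Fin n × Fin p), Measurable (fun ω => V ω q.1 q.2.1 q.2.2) :=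
    fun q => hVmeas.eval3 q.1 q.2.1 q.2.2
  -- each coordinate of V is a fair coin for both values
  have hhalf : ∀ (q : Fin E × Fin n × Fin p) (cc : Bool),
      μ ((fun ω => V ω q.1 q.2.1 q.2.2) ⁻¹' {cc}) = 1/2 := by
    intro q cc
    have htrue : μ ((fun ω => V ω q.1 q.2.1 q.2.2) ⁻¹' {true}) = 1/2 := by
      simpa [Set.preimage, Set.mem_singleton_iff] using hVfair q.1 q.2.1 q.2.2
    cases cc
    · have hc : (fun ω => V ω q.1 q.2.1 q.2.2) ⁻¹' {false}
          = ((fun ω => V ω q.1 q.2.1 q.2.2) ⁻¹' {true})ᶜ := by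
        ext ω; simp
      rw [hc, measure_compl ((hev q) (measurableSet_singleton true)) (measure_ne_top μ _),
        htrue, measure_univ]
      exact ENNReal.sub_half ENNReal.one_ne_top
    · exact htrue
  -- the law of V puts equal mass on every point
  have hconst : ∀ v0 : Fin E → Fin n → Fin p → Bool,
      μ (V ⁻¹' {v0}) = (1/2 : ℝ≥0∞) ^ (Fintype.card (Fin E × Fin n × Fin p)) := by
    intro v0
    have hpre : V ⁻¹' {v0} = ⋂ q ∈ (Finset.univ : Finset (Fin E × Fin n × Fin p)),
        (fun ω => V ω q.1 q.2.1 q.2.2) ⁻¹' {v0 q.1 q.2.1 q.2.2} := by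
      ext ω
      simp only [Set.mem_preimage, Set.mem_singleton_iff, Set.mem_iInter, Finset.mem_univ,
        Set.iInter_true]
      constructor
      · intro h q; rw [h]
      · intro h
        funext e i j
        exact h (e, i, j)
    rw [hpre, hViid.measure_inter_preimage_eq_mul Finset.univ
      (fun q _ => measurableSet_singleton _)]
    rw [Finset.prod_congr rfl (fun q _ => hhalf q _), Finset.prod_const, Finset.card_univ]
  -- the law of V is invariant under flipping by any fixed pattern
  have hinv : ∀ b : Fin E → Fin n → Fin p → Bool,
      (μ.map V).map (bflip b) = μ.map V := by
    intro b
    refine measure_ext_of_singleton fun x => ?_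
    rw [Measure.map_apply (measurable_bflip b) (measurableSet_singleton x),
      Measure.map_apply hVmeas ((measurable_bflip b) (measurableSet_singleton x)),
      Measure.map_apply hVmeas (measurableSet_singleton x), bflip_preimage_singleton,
      hconst, hconst]
  -- probability measure instances
  haveI : IsProbabilityMeasure (μ.map V) := Measure.isProbabilityMeasure_map hVmeas.aemeasurable
  haveI : IsProbabilityMeasure (μ.map Z) := Measure.isProbabilityMeasure_map hZ.aemeasurable
  -- step 1: joint law of (V, Z) is a product
  have h1 : μ.map (fun ω => (V ω, Z ω)) = (μ.map V).prod (μ.map Z) :=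
    (indepFun_iff_map_prod_eq_prod_map_map hVmeas.aemeasurable hZ.aemeasurable).mp hVindep
  have h3 : μ.map (fun ω => (V' ω, (Y ω, XX'' ω))) = ((μ.map V).prod (μ.map Z)).map Θ := by
    rw [h2, ← Measure.map_map mΘ (hVmeas.prodMk hZ), h1]
  -- step 2: pushing the product through Θ
  have h4 : ((μ.map V).prod (μ.map Z)).map Θ = (μ.map V).prod ((μ.map Z).map c) := by
    ext s hs
    rw [Measure.map_apply mΘ hs, Measure.prod_apply_symm (mΘ hs),
      Measure.prod_apply_symm hs, lintegral_map (measurable_measure_prodMk_right hs) mc]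
    refine lintegral_congr fun z => ?_
    have hΘz : ∀ v, Θ (v, z) = (bflip (fun e i j => decide (z.2.2 e j < 0)) v, c z) := by
      intro v
      refine Prod.ext ?_ rfl
      funext e i j
      simp [hΘdef, bflip]
    have hset : (fun v => (v, z)) ⁻¹' (Θ ⁻¹' s)
        = bflip (fun e i j => decide (z.2.2 e j < 0)) ⁻¹' ((fun v => (v, c z)) ⁻¹' s) := by
      ext v
      simp only [Set.mem_preimage, hΘz]
    rw [hset, ← Measure.map_apply (measurable_bflip _)
      ((measurable_prodMk_right) hs), hinv]
  -- step 3: knockoff validity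
  have h5 : (μ.map Z).map c = μ.map (fun ω => (Y ω, XX ω)) := by
    rw [Measure.map_map mc hZ]
    exact hknock
  -- step 4: joint law of (V, (Y, XX)) is the same product
  have hVYX : IndepFun V (fun ω => (Y ω, XX ω)) μ := by
    have := hVindep.comp measurable_id
      (measurable_fst.prodMk (measurable_fst.comp measurable_snd))
    exact this
  have h6 : (μ.map V).prod (μ.map (fun ω => (Y ω, XX ω)))
      = μ.map (fun ω => (V ω, (Y ω, XX ω))) :=
    ((indepFun_iff_map_prod_eq_prod_map_map hVmeas.aemeasurable hYXX.aemeasurable).mp hVYX).symm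
  have h7 : μ.map (fun ω => (V' ω, (Y ω, XX'' ω))) = μ.map (fun ω => (V ω, (Y ω, XX ω))) := by
    rw [h3, h4, h5, h6]
  -- step 5: reorder the components
  set r : (Fin E → Fin n → Fin p → Bool) ×
      ((Fin E → Fin n → ℝ) × (Fin E → Fin n → Fin p → ℝ × ℝ)) →
      (Fin E → Fin n → ℝ) × (Fin E → Fin n → Fin p → ℝ × ℝ) ×
      (Fin E → Fin n → Fin p → Bool) :=
    fun q => (q.2.1, q.2.2, q.1) with hrdef
  have mr : Measurable r :=
    (measurable_fst.comp measurable_snd).prodMk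
      ((measurable_snd.comp measurable_snd).prodMk measurable_fst)
  have h8 : μ.map (fun ω => (Y ω, XX'' ω, V' ω)) = μ.map (fun ω => (Y ω, XX ω, V ω)) := by
    have := congrArg (Measure.map r) h7
    rwa [Measure.map_map mr hV'YXX''meas, Measure.map_map mr (hVmeas.prodMk hYXX)] at this
  -- step 6: W ⊙ ε is H of the swapped data
  have h10 : (fun ω => fun e j => W ω e j * ε ω e j) = fun ω => H (Y ω, XX'' ω, V' ω) := by
    funext ω e j
    set S : Finset (Fin E × Fin p) :=
      Finset.univ.filter (fun ej : Fin E × Fin p => ε ω ej.1 ej.2 < 0) with hSdef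
    have hxx : XX'' ω = swapCols S (XX ω) := by
      funext e' i' j'
      simp [hXX''def, swapColsSign, swapCols, hSdef]
    have hobs : swapObsCoins (V' ω) (XX'' ω) = swapObsCoins (V ω) (XX ω) := by
      funext e' i' j'
      by_cases hc : ε ω e' j' < 0 <;> by_cases hv : V ω e' i' j' = true <;>
        simp [swapObsCoins, hV'def, hXX''def, swapColsSign, hc, hv]
    show W ω e j * ε ω e j
      = (F (g (Y ω) (swapObsCoins (V' ω) (XX'' ω))) (Y ω) (XX'' ω) e j).1
        - (F (g (Y ω) (swapObsCoins (V' ω) (XX'' ω))) (Y ω) (XX'' ω) e j).2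
    rw [hobs, ← hπ, hxx, hFequiv]
    rcases hεsign ω e j with h1 | h1
    · have hmem : (e, j) ∉ S := by
        simp [hSdef, h1]
      rw [hW]
      simp [swapStats, hmem, h1]
    · have hmem : (e, j) ∈ S := by
        simp [hSdef, h1]
      rw [hW]
      simp only [swapStats, hmem, if_true, Prod.fst_swap, Prod.snd_swap, h1]
      ring
  -- step 7: independence of ε and W
  have hindepεW : IndepFun ε W μ := by
    rw [h9]
    have := hεdata.comp measurable_id mH
    exact this
  -- step 8: the distributional identity
  have hdist : Measure.map W μ = Measure.map (fun ω => fun e j => W ω e j * ε ω e j) μ := by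
    rw [h10, h9]
    have e1 : (fun ω => H (Y ω, XX ω, V ω)) = H ∘ (fun ω => (Y ω, XX ω, V ω)) := rfl
    have e2 : (fun ω => H (Y ω, XX'' ω, V' ω)) = H ∘ (fun ω => (Y ω, XX'' ω, V' ω)) := rfl
    have hmeas2 : Measurable (fun ω => (Y ω, XX'' ω, V' ω)) := by
      have : (fun ω => (Y ω, XX'' ω, V' ω)) = r ∘ (fun ω => (V' ω, (Y ω, XX'' ω))) := rfl
      rw [this]
      exact mr.comp hV'YXX''meas
    rw [e1, e2, ← Measure.map_map mH hYXXV, ← Measure.map_map mH hmeas2, h8]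
  exact ⟨ε, hεmeas, hεsign, hεindep, hindepεW, hεnull, hεnonnull, hdist⟩
end

section
/- Let W ∈ R^{E×p} be a matrix of valid multi-environment knockoff statistics (Definition 1). For each j ∈ {1,...,p}, define the one-bit p-value p_j^cst = 1/2 if the signs of W^1_j, ..., W^E_j are all +1, and p_j^cst = 1 otherwise; define |W_j^cst| = w̄(|W^1_j|, ..., |W^E_j|) for a fixed symmetric function w̄. Then, for every j such that the consistent conditional independence null hypothesis H^cst_j is true and for every α ∈ [0,1], P(p_j^cst ≤ α | |W^cst|, p_{-j}^cst) ≤ α, where |W^cst| = (|W_1^cst|, ..., |W_p^cst|) and p_{-j}^cst denotes all the one-bit p-values except the j-th. In particular, conditional on |W^cst|, each null p_j^cst stochastically dominates the uniform distribution on [0,1]. -/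
open MeasureTheory ProbabilityTheory

/-- If the conditional expectation's defining set-integral inequality holds on every
`m`-measurable set, the conditional expectation is a.e. bounded by the constant. -/
lemma aux_condexp_le {Ω : Type*} {m m0 : MeasurableSpace Ω} (hm : m ≤ m0)
    (μ : Measure Ω) [IsProbabilityMeasure μ]
    {f : Ω → ℝ} (hf : Integrable f μ) {c : ℝ}
    (hkey : ∀ A, MeasurableSet[m] A → ∫ x in A, f x ∂μ ≤ c * (μ A).toReal) :
    μ[f|m] ≤ᵐ[μ] fun _ => c := by
  haveI hfin : IsFiniteMeasure (μ.trim hm) := by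
    constructor
    rw [trim_measurableSet_eq hm MeasurableSet.univ]
    exact measure_lt_top μ _
  have hg : StronglyMeasurable[m] (μ[f|m]) := stronglyMeasurable_condExp
  have h1 : Integrable (μ[f|m]) (μ.trim hm) := integrable_condExp.trim hm hg
  have h2 : Integrable (fun _ => c) (μ.trim hm) := integrable_const c
  have h3 : (μ[f|m]) ≤ᵐ[μ.trim hm] fun _ => c := by
    refine ae_le_of_forall_setIntegral_le h1 h2 fun s hs _ => ?_
    have e1 : ∫ x in s, (μ[f|m]) x ∂(μ.trim hm) = ∫ x in s, (μ[f|m]) x ∂μ :=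
      (setIntegral_trim hm hg hs).symm
    have e2 : ∫ x in s, (fun _ => c) x ∂(μ.trim hm) = c * (μ s).toReal := by
      simp only [integral_const, measureReal_def, Measure.restrict_apply_univ, trim_measurableSet_eq hm hs,
        smul_eq_mul]
      ring
    rw [e1, e2, setIntegral_condExp hm hf hs]
    exact hkey s hs
  exact ae_le_of_ae_le_trim h3

/-- Auxiliary index family: `none` indexes the statistic matrix `W`, `some (e, j)`
indexes the sign `ε e j`. -/
@[reducible] def MEKSbeta (E p : ℕ) : Option (Fin E × Fin p) → Type
  | none => Fin E → Fin p → ℝ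
  | some _ => ℝ

instance MEKSbetaMeas (E p : ℕ) : ∀ i, MeasurableSpace (MEKSbeta E p i)
  | none => (inferInstance : MeasurableSpace (Fin E → Fin p → ℝ))
  | some _ => (inferInstance : MeasurableSpace ℝ)

/-- A single sign coordinate is independent of the pair consisting of `W` and all the
other sign coordinates. -/
lemma aux_indep {Ω : Type*} [MeasurableSpace Ω] {E p : ℕ}
    (μ : Measure Ω) [IsProbabilityMeasure μ]
    (W : Ω → Fin E → Fin p → ℝ) (hWmeas : Measurable W)
    (ε : Ω → Fin E → Fin p → ℝ) (hεmeas : Measurable ε)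
    (hiid : iIndepFun
      (fun ej : Fin E × Fin p => fun ω => ε ω ej.1 ej.2) μ)
    (hεW : IndepFun ε W μ) (c₀ : Fin E × Fin p) :
    IndepFun
      (fun ω => (W ω, fun c : {c : Fin E × Fin p // c ≠ c₀} => ε ω c.1.1 c.1.2))
      (fun ω => ε ω c₀.1 c₀.2) μ := by
  classical
  set ι := Option (Fin E × Fin p) with hι
  let f : ∀ i, Ω → MEKSbeta E p i := fun i => match i with
    | none => W
    | some c => fun ω => ε ω c.1 c.2
  have hfmeas : ∀ i, Measurable (f i) := by
    rintro (_|c)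
    · exact hWmeas
    · exact ((measurable_pi_apply c.2).comp (measurable_pi_apply c.1)).comp hεmeas
  have hpre : ∀ (T' : Finset (Fin E × Fin p)) (s : ∀ i : ι, Set (MEKSbeta E p i)),
      (⋂ c ∈ T', f (some c) ⁻¹' s (some c))
        = ε ⁻¹' (⋂ c ∈ T', (fun x : Fin E → Fin p → ℝ => x c.1 c.2) ⁻¹' s (some c)) := by
    intro T' s
    ext ω
    simp [f]
  have hmeasu : ∀ (T' : Finset (Fin E × Fin p)) (s : ∀ i : ι, Set (MEKSbeta E p i)),
      (∀ c ∈ T', MeasurableSet (s (some c))) →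
      MeasurableSet (⋂ c ∈ T', (fun x : Fin E → Fin p → ℝ => x c.1 c.2) ⁻¹' s (some c)) := by
    intro T' s hs
    refine Finset.measurableSet_biInter _ fun c hc => ?_
    exact ((measurable_pi_apply c.2).comp (measurable_pi_apply c.1)) (hs c hc)
  have hεfin : ∀ (T' : Finset (Fin E × Fin p)) (s : ∀ i : ι, Set (MEKSbeta E p i)),
      (∀ c ∈ T', MeasurableSet (s (some c))) →
      μ (⋂ c ∈ T', f (some c) ⁻¹' s (some c))
        = ∏ c ∈ T', μ (f (some c) ⁻¹' s (some c)) := by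
    intro T' s hs
    exact hiid.measure_inter_preimage_eq_mul T' (sets := fun c => s (some c)) hs
  have hall : iIndepFun f μ := by
    rw [iIndepFun_iff_measure_inter_preimage_eq_mul]
    intro S sets hsets
    by_cases hn : (none : ι) ∈ S
    · set T := S.erase none with hT
      have hTn : (none : ι) ∉ T := Finset.notMem_erase _ _
      set T' : Finset (Fin E × Fin p) := T.preimage some
        (Set.injOn_of_injective (Option.some_injective _)) with hT'
      have hTT' : T = T'.image some := by
        ext i
        cases i with
        | none => simp [hT', hTn, Finset.mem_image]
        | some c => simp [hT', Finset.mem_preimage, Finset.mem_image]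
      have hS : S = insert none T := (Finset.insert_erase hn).symm
      have hsplit : (⋂ i ∈ S, f i ⁻¹' sets i)
          = f none ⁻¹' sets none ∩ ⋂ c ∈ T', f (some c) ⁻¹' sets (some c) := by
        rw [hS, Finset.set_biInter_insert]
        congr 1
        rw [hTT']
        exact Finset.set_biInter_finset_image
      have hmemS : ∀ c ∈ T', some c ∈ S := by
        intro c hc
        have : some c ∈ T := by rw [hTT']; exact Finset.mem_image_of_mem _ hc
        exact Finset.mem_of_mem_erase this
      have hu := hmeasu T' sets (fun c hc => hsets (some c) (hmemS c hc))
      have key : μ (f none ⁻¹' sets none ∩ ⋂ c ∈ T', f (some c) ⁻¹' sets (some c))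
          = μ (f none ⁻¹' sets none) * ∏ c ∈ T', μ (f (some c) ⁻¹' sets (some c)) := by
        rw [hpre T' sets, Set.inter_comm]
        rw [hεW.measure_inter_preimage_eq_mul _ _ hu (hsets none hn)]
        rw [← hpre T' sets, hεfin T' sets (fun c hc => hsets (some c) (hmemS c hc))]
        ring
      rw [hsplit, key, hS, Finset.prod_insert hTn, hTT', Finset.prod_image]
      intro x _ y _ h
      exact Option.some_injective _ h
    · set T' : Finset (Fin E × Fin p) := S.preimage some
        (Set.injOn_of_injective (Option.some_injective _)) with hT'
      have hTT' : S = T'.image some := by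
        ext i
        cases i with
        | none => simp [hT', hn, Finset.mem_image]
        | some c => simp [hT', Finset.mem_preimage, Finset.mem_image]
      have hmemS : ∀ c ∈ T', some c ∈ S := by
        intro c hc
        rw [hTT']; exact Finset.mem_image_of_mem _ hc
      have h1 : (⋂ i ∈ S, f i ⁻¹' sets i) = ⋂ c ∈ T', f (some c) ⁻¹' sets (some c) := by
        rw [hTT']; exact Finset.set_biInter_finset_image
      rw [h1, hεfin T' sets (fun c hc => hsets (some c) (hmemS c hc)), hTT',
        Finset.prod_image]
      intro x _ y _ h
      exact Option.some_injective _ h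
  have hdisj : Disjoint ({some c₀}ᶜ : Finset ι) {some c₀} := by
    simp
  have hfin := hall.indepFun_finset ({some c₀}ᶜ : Finset ι) {some c₀} hdisj hfmeas
  have hnmem : (none : ι) ∈ ({some c₀}ᶜ : Finset ι) := by simp
  have hsmem : ∀ c : {c : Fin E × Fin p // c ≠ c₀}, (some c.1 : ι) ∈ ({some c₀}ᶜ : Finset ι) := by
    intro c; simp [c.2]
  let φ : (∀ i : ({some c₀}ᶜ : Finset ι), MEKSbeta E p i) →
      (Fin E → Fin p → ℝ) × ({c : Fin E × Fin p // c ≠ c₀} → ℝ) :=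
    fun v => (v ⟨none, hnmem⟩, fun c => v ⟨some c.1, hsmem c⟩)
  have hφ : Measurable φ :=
    Measurable.prodMk (measurable_pi_apply _)
      (measurable_pi_lambda _ fun c => measurable_pi_apply _)
  let ψ : (∀ i : ({some c₀} : Finset ι), MEKSbeta E p i) → ℝ :=
    fun v => v ⟨some c₀, Finset.mem_singleton_self _⟩
  have hψ : Measurable ψ := measurable_pi_apply _
  exact hfin.comp hφ hψ

/-- Generic one-bit p-value conditional bound. -/
lemma aux_main {Ω : Type*} {m m0 : MeasurableSpace Ω} (hm : m ≤ m0)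
    (μ : Measure Ω) [IsProbabilityMeasure μ]
    {pj : Ω → ℝ} (hpj : Measurable pj)
    {S : Set Ω} (hS : MeasurableSet S)
    (hhalf : ∀ ω ∈ S, pj ω = 1/2) (hone : ∀ ω ∉ S, pj ω = 1)
    (hK : ∀ A : Set Ω, MeasurableSet[m] A → μ (A ∩ S) ≤ μ A / 2)
    {α : ℝ} (hα0 : 0 ≤ α) (hα1 : α ≤ 1) :
    μ[Set.indicator {ω | pj ω ≤ α} (fun _ => (1:ℝ))|m] ≤ᵐ[μ] fun _ => α := by
  have hS'meas : MeasurableSet {ω | pj ω ≤ α} := measurableSet_le hpj measurable_const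
  rcases lt_or_ge α (1/2) with hlt | hge
  · have hempty : {ω | pj ω ≤ α} = ∅ := by
      ext ω
      simp only [Set.mem_setOf_eq, Set.mem_empty_iff_false, iff_false, not_le]
      have h12 : (1:ℝ)/2 ≤ pj ω := by
        by_cases h : ω ∈ S
        · rw [hhalf ω h]
        · rw [hone ω h]; linarith
      linarith
    rw [hempty]
    have hzero : (∅ : Set Ω).indicator (fun _ : Ω => (1:ℝ)) = (0 : Ω → ℝ) := by
      ext ω; simp
    rw [hzero, condExp_zero]
    exact Filter.Eventually.of_forall fun ω => hα0
  · rcases eq_or_lt_of_le hα1 with heq | hlt1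
    · subst heq
      have hmono := condExp_mono (m := m) (μ := μ)
        ((integrable_const (1:ℝ)).indicator hS'meas) (integrable_const (1:ℝ))
        (Filter.Eventually.of_forall fun ω => by
          by_cases h : ω ∈ {ω | pj ω ≤ (1:ℝ)} <;> simp [Set.indicator_apply, h])
      rw [condExp_const hm (1:ℝ)] at hmono
      exact hmono
    · have hSS : {ω | pj ω ≤ α} = S := by
        ext ω
        simp only [Set.mem_setOf_eq]
        constructor
        · intro hle
          by_contra h
          rw [hone ω h] at hle
          linarith
        · intro h
          rw [hhalf ω h]
          exact hge
      rw [hSS]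
      refine aux_condexp_le hm μ ((integrable_const (1:ℝ)).indicator hS) ?_
      intro A hA
      have hIA : ∫ x in A, S.indicator (fun _ => (1:ℝ)) x ∂μ = (μ (A ∩ S)).toReal := by
        rw [setIntegral_indicator hS]
        simp [Measure.restrict_apply_univ, measureReal_def]
      rw [hIA]
      have hle2 := hK A hA
      have h2ne : μ A / 2 ≠ ⊤ := (ENNReal.div_lt_top (measure_ne_top μ A) two_ne_zero).ne
      have htr : (μ (A ∩ S)).toReal ≤ (μ A).toReal / 2 := by
        have := ENNReal.toReal_mono h2ne hle2
        rwa [ENNReal.toReal_div, ENNReal.toReal_ofNat] at this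
      have hnn : (0:ℝ) ≤ (μ A).toReal := ENNReal.toReal_nonneg
      nlinarith


/--
**Proposition 6: multi-environment one-bit p-values.**
Let `W` be a matrix of valid multi-environment knockoff statistics (Definition 1), with
`null e j` encoding the truth of `H^{ci,e}_j`.  For each variable `j`, the one-bit
p-value is `p_j^cst = 1/2` if all the signs of `W^1_j, …, W^E_j` are `+1` and `p_j^cst = 1`
otherwise, and `|W_j^cst| = w̄(|W^1_j|, …, |W^E_j|)` for a fixed symmetric function `w̄`.
Then, for every `j` such that the consistent null `H^cst_j` is true (i.e. `∃ e, null e j`)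
and every `α ∈ [0,1]`, `P(p_j^cst ≤ α ∣ |W^cst|, p_{-j}^cst) ≤ α` almost surely; in
particular, conditional on `|W^cst|` alone, each null `p_j^cst` stochastically dominates
the uniform distribution.
-/
theorem multi_environment_one_bit_pvalues
    {Ω : Type*} [MeasurableSpace Ω] (μ : Measure Ω) [IsProbabilityMeasure μ]
    (E p : ℕ)
    (null : Fin E → Fin p → Prop)
    (W : Ω → Fin E → Fin p → ℝ) (hWmeas : Measurable W)
    (hW : IsValidMEKS μ null W)
    -- the symmetric combining function w̄ for the absolute statistics
    (wbar : (Fin E → ℝ) → ℝ) (hwbar : Measurable wbar)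
    (hsymm : ∀ (v : Fin E → ℝ) (σ : Equiv.Perm (Fin E)), wbar (v ∘ σ) = wbar v)
    -- the one-bit p-values p^cst and the combined absolute statistics |W^cst|
    (pcst : Ω → Fin p → ℝ)
    (hpcst_half : ∀ ω j, (∀ e, 0 < W ω e j) → pcst ω j = 1/2)
    (hpcst_one : ∀ ω j, ¬ (∀ e, 0 < W ω e j) → pcst ω j = 1)
    (absW : Ω → Fin p → ℝ)
    (habsW : ∀ ω j, absW ω j = wbar (fun e => |W ω e j|)) :
    ∀ j : Fin p, (∃ e, null e j) → ∀ α ∈ Set.Icc (0 : ℝ) 1,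
      -- almost-independence: P(p_j^cst ≤ α ∣ |W^cst|, p_{-j}^cst) ≤ α
      (μ⟦ {ω | pcst ω j ≤ α} |
          MeasurableSpace.comap
            (fun ω => (absW ω, fun k : {k : Fin p // k ≠ j} => pcst ω k)) inferInstance ⟧
        ≤ᵐ[μ] fun _ => α) ∧
      -- in particular: P(p_j^cst ≤ α ∣ |W^cst|) ≤ α
      (μ⟦ {ω | pcst ω j ≤ α} |
          MeasurableSpace.comap absW inferInstance ⟧
        ≤ᵐ[μ] fun _ => α) := by
  classical
  obtain ⟨ε, hεmeas, hεpm, hεiid, hεW, hεnull, -, hmap⟩ := hW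
  intro j hj
  obtain ⟨e₀, he₀⟩ := hj
  -- the p-values and absolute statistics as functions of the matrix
  set g : (Fin E → Fin p → ℝ) → Fin p → ℝ :=
    fun x k => if ∀ e, 0 < x e k then (1:ℝ)/2 else 1 with hg_def
  set Wabs : (Fin E → Fin p → ℝ) → Fin p → ℝ :=
    fun x k => wbar (fun e => |x e k|) with hWabs_def
  set Ψ : (Fin E → Fin p → ℝ) → (Fin p → ℝ) × ({k : Fin p // k ≠ j} → ℝ) :=
    fun x => (Wabs x, fun k => g x k.1) with hΨ_def
  have hsetk : ∀ k : Fin p, MeasurableSet {x : Fin E → Fin p → ℝ | ∀ e, 0 < x e k} := by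
    intro k
    have : {x : Fin E → Fin p → ℝ | ∀ e, 0 < x e k} = ⋂ e, {x | 0 < x e k} := by
      ext x; simp
    rw [this]
    exact MeasurableSet.iInter fun e =>
      measurableSet_lt measurable_const ((measurable_pi_apply k).comp (measurable_pi_apply e))
  have hgmeas : Measurable g := by
    refine measurable_pi_lambda _ fun k => ?_
    exact Measurable.ite (hsetk k) measurable_const measurable_const
  have hhAmeas : Measurable Wabs := by
    refine measurable_pi_lambda _ fun k => ?_
    exact hwbar.comp (measurable_pi_lambda _ fun e =>
      ((measurable_pi_apply k).comp (measurable_pi_apply e)).abs)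
  have hΨmeas : Measurable Ψ :=
    hhAmeas.prodMk (measurable_pi_lambda _ fun k => (measurable_pi_apply k.1).comp hgmeas)
  have hpcstg : ∀ ω k, pcst ω k = g (W ω) k := by
    intro ω k
    by_cases h : ∀ e, 0 < W ω e k
    · rw [hpcst_half ω k h]; simp [hg_def, h]
    · rw [hpcst_one ω k h]; simp [hg_def, h]
  have habsg : ∀ ω, absW ω = Wabs (W ω) := fun ω => funext fun k => habsW ω k
  have hpair : (fun ω => (absW ω, fun k : {k : Fin p // k ≠ j} => pcst ω k))
      = fun ω => Ψ (W ω) := by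
    funext ω
    exact Prod.ext (habsg ω) (funext fun k => hpcstg ω k.1)
  set S : Set Ω := {ω | ∀ e, 0 < W ω e j} with hS_def
  have hSmeas : MeasurableSet S := by
    have : S = W ⁻¹' {x | ∀ e, 0 < x e j} := rfl
    rw [this]; exact hWmeas (hsetk j)
  -- the key inequality
  have key : ∀ M : Set ((Fin p → ℝ) × ({k : Fin p // k ≠ j} → ℝ)), MeasurableSet M →
      μ ((fun ω => Ψ (W ω)) ⁻¹' M ∩ S) ≤ μ ((fun ω => Ψ (W ω)) ⁻¹' M) / 2 := by
    intro M hM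
    set W' : Ω → Fin E → Fin p → ℝ := fun ω => fun e j => W ω e j * ε ω e j with hW'_def
    have hW'meas : Measurable W' := by
      refine measurable_pi_lambda _ fun e => measurable_pi_lambda _ fun k => ?_
      exact ((measurable_pi_apply k).comp ((measurable_pi_apply e).comp hWmeas)).mul
        ((measurable_pi_apply k).comp ((measurable_pi_apply e).comp hεmeas))
    set C : Set (Fin E → Fin p → ℝ) := Ψ ⁻¹' M ∩ {x | ∀ e, 0 < x e j} with hC_def
    have hCmeas : MeasurableSet C := (hΨmeas hM).inter (hsetk j)
    have h1 : (fun ω => Ψ (W ω)) ⁻¹' M ∩ S = W ⁻¹' C := rfl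
    have h2 : μ (W ⁻¹' C) = μ (W' ⁻¹' C) := by
      rw [← Measure.map_apply hWmeas hCmeas, hmap, Measure.map_apply hW'meas hCmeas]
    set R : Ω → {c : Fin E × Fin p // c ≠ (e₀, j)} → ℝ :=
      fun ω c => ε ω c.1.1 c.1.2 with hR_def
    have hRmeas : Measurable R := by
      rw [hR_def]
      exact measurable_pi_lambda _ fun c => hεmeas.eval.eval
    set Θ : (Fin E → Fin p → ℝ) × ({c : Fin E × Fin p // c ≠ (e₀, j)} → ℝ)
        → (Fin p → ℝ) × ({k : Fin p // k ≠ j} → ℝ) :=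
      fun q => (Wabs q.1, fun k =>
        if ∀ e, 0 < q.1 e k.1 * q.2 ⟨(e, k.1), fun hc => k.2 (congrArg Prod.snd hc)⟩
        then (1:ℝ)/2 else 1) with hΘ_def
    have hΘmeas : Measurable Θ := by
      refine (hhAmeas.comp measurable_fst).prodMk (measurable_pi_lambda _ fun k => ?_)
      refine Measurable.ite ?_ measurable_const measurable_const
      have : {q : (Fin E → Fin p → ℝ) × ({c : Fin E × Fin p // c ≠ (e₀, j)} → ℝ) |
          ∀ e, 0 < q.1 e k.1 * q.2 ⟨(e, k.1), fun hc => k.2 (congrArg Prod.snd hc)⟩}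
          = ⋂ e, {q | 0 < q.1 e k.1 * q.2 ⟨(e, k.1), fun hc => k.2 (congrArg Prod.snd hc)⟩} := by
        ext q; simp
      rw [this]
      refine MeasurableSet.iInter fun e =>
        measurableSet_lt measurable_const (Measurable.mul ?_ ?_)
      · exact (measurable_pi_apply k.1).comp ((measurable_pi_apply e).comp measurable_fst)
      · exact (measurable_pi_apply _).comp measurable_snd
    have hΘΨ : ∀ ω, Θ (W ω, R ω) = Ψ (W' ω) := by
      intro ω
      refine Prod.ext ?_ rfl
      show Wabs (W ω) = Wabs (W' ω)
      funext k
      show wbar (fun e => |W ω e k|) = wbar (fun e => |W' ω e k|)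
      congr 1
      funext e
      rcases hεpm ω e k with h | h <;> simp [hW'_def, h, abs_mul]
    set ε₀ : Ω → ℝ := fun ω => ε ω e₀ j with hε₀_def
    have hindep : IndepFun (fun ω => (W ω, R ω)) ε₀ μ :=
      aux_indep μ W hWmeas ε hεmeas hεiid hεW (e₀, j)
    set D : Set Ω := (fun ω => (W ω, R ω)) ⁻¹' (Θ ⁻¹' M) with hD_def
    set P : Set ((Fin E → Fin p → ℝ) × ({c : Fin E × Fin p // c ≠ (e₀, j)} → ℝ)) :=
      {q | 0 < q.1 e₀ j} with hP_def
    set N : Set ((Fin E → Fin p → ℝ) × ({c : Fin E × Fin p // c ≠ (e₀, j)} → ℝ)) :=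
      {q | q.1 e₀ j < 0} with hN_def
    have hPmeas : MeasurableSet P :=
      measurableSet_lt measurable_const
        ((measurable_pi_apply j).comp ((measurable_pi_apply e₀).comp measurable_fst))
    have hNmeas : MeasurableSet N :=
      measurableSet_lt
        ((measurable_pi_apply j).comp ((measurable_pi_apply e₀).comp measurable_fst))
        measurable_const
    have hpairmeas : Measurable (fun ω => (W ω, R ω)) := hWmeas.prodMk hRmeas
    have hsub : W' ⁻¹' C ⊆
        ((fun ω => (W ω, R ω)) ⁻¹' (Θ ⁻¹' M ∩ P) ∩ ε₀ ⁻¹' {1})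
          ∪ ((fun ω => (W ω, R ω)) ⁻¹' (Θ ⁻¹' M ∩ N) ∩ ε₀ ⁻¹' {-1}) := by
      intro ω hω
      have hM' : Ψ (W' ω) ∈ M := hω.1
      have hpos : ∀ e, 0 < W' ω e j := hω.2
      have hD' : Θ (W ω, R ω) ∈ M := by rw [hΘΨ ω]; exact hM'
      have h0 := hpos e₀
      rcases hεpm ω e₀ j with h | h
      · left
        refine ⟨⟨hD', ?_⟩, h⟩
        have : 0 < W ω e₀ j * ε ω e₀ j := h0
        rw [h, mul_one] at this
        exact this
      · right
        refine ⟨⟨hD', ?_⟩, h⟩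
        have : 0 < W ω e₀ j * ε ω e₀ j := h0
        rw [h, mul_neg_one] at this
        show W ω e₀ j < 0
        linarith
    have hhalf1 : μ (ε₀ ⁻¹' {1}) = 1/2 := by
      have : ε₀ ⁻¹' {1} = {ω | ε ω e₀ j = 1} := by ext ω; simp [hε₀_def]
      rw [this]; exact (hεnull e₀ j he₀).1
    have hhalf2 : μ (ε₀ ⁻¹' {-1}) = 1/2 := by
      have : ε₀ ⁻¹' {-1} = {ω | ε ω e₀ j = -1} := by ext ω; simp [hε₀_def]
      rw [this]; exact (hεnull e₀ j he₀).2
    have hc1 : μ ((fun ω => (W ω, R ω)) ⁻¹' (Θ ⁻¹' M ∩ P) ∩ ε₀ ⁻¹' {1})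
        = μ ((fun ω => (W ω, R ω)) ⁻¹' (Θ ⁻¹' M ∩ P)) * (1/2) := by
      rw [hindep.measure_inter_preimage_eq_mul _ _ ((hΘmeas hM).inter hPmeas)
        (measurableSet_singleton 1), hhalf1]
    have hc2 : μ ((fun ω => (W ω, R ω)) ⁻¹' (Θ ⁻¹' M ∩ N) ∩ ε₀ ⁻¹' {-1})
        = μ ((fun ω => (W ω, R ω)) ⁻¹' (Θ ⁻¹' M ∩ N)) * (1/2) := by
      rw [hindep.measure_inter_preimage_eq_mul _ _ ((hΘmeas hM).inter hNmeas)
        (measurableSet_singleton (-1)), hhalf2]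
    have hdisj : Disjoint ((fun ω => (W ω, R ω)) ⁻¹' (Θ ⁻¹' M ∩ P))
        ((fun ω => (W ω, R ω)) ⁻¹' (Θ ⁻¹' M ∩ N)) := by
      rw [Set.disjoint_left]
      rintro ω ⟨-, h1⟩ ⟨-, h2⟩
      have h1' : 0 < W ω e₀ j := h1
      have h2' : W ω e₀ j < 0 := h2
      exact (lt_asymm h1') h2'
    have hDeq : μ ((fun ω => (W ω, R ω)) ⁻¹' (Θ ⁻¹' M))
        = μ ((fun ω => Ψ (W ω)) ⁻¹' M) := by
      have e1 : (fun ω => (W ω, R ω)) ⁻¹' (Θ ⁻¹' M) = W' ⁻¹' (Ψ ⁻¹' M) := by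
        ext ω
        simp only [Set.mem_preimage]
        rw [hΘΨ ω]
      rw [e1, ← Measure.map_apply hW'meas (hΨmeas hM), ← hmap,
        Measure.map_apply hWmeas (hΨmeas hM)]
      rfl
    calc μ ((fun ω => Ψ (W ω)) ⁻¹' M ∩ S) = μ (W' ⁻¹' C) := by rw [h1, h2]
      _ ≤ μ (((fun ω => (W ω, R ω)) ⁻¹' (Θ ⁻¹' M ∩ P) ∩ ε₀ ⁻¹' {1})
          ∪ ((fun ω => (W ω, R ω)) ⁻¹' (Θ ⁻¹' M ∩ N) ∩ ε₀ ⁻¹' {-1})) := measure_mono hsub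
      _ ≤ μ ((fun ω => (W ω, R ω)) ⁻¹' (Θ ⁻¹' M ∩ P) ∩ ε₀ ⁻¹' {1})
          + μ ((fun ω => (W ω, R ω)) ⁻¹' (Θ ⁻¹' M ∩ N) ∩ ε₀ ⁻¹' {-1}) := measure_union_le _ _
      _ = (μ ((fun ω => (W ω, R ω)) ⁻¹' (Θ ⁻¹' M ∩ P))
          + μ ((fun ω => (W ω, R ω)) ⁻¹' (Θ ⁻¹' M ∩ N))) * (1/2) := by
          rw [hc1, hc2, add_mul]
      _ = μ ((fun ω => (W ω, R ω)) ⁻¹' (Θ ⁻¹' M ∩ P)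
          ∪ (fun ω => (W ω, R ω)) ⁻¹' (Θ ⁻¹' M ∩ N)) * (1/2) := by
          rw [measure_union hdisj (hpairmeas ((hΘmeas hM).inter hNmeas))]
      _ ≤ μ ((fun ω => (W ω, R ω)) ⁻¹' (Θ ⁻¹' M)) * (1/2) := by
          refine mul_le_mul_left (measure_mono ?_) _
          refine Set.union_subset ?_ ?_ <;>
            exact Set.preimage_mono Set.inter_subset_left
      _ = μ ((fun ω => Ψ (W ω)) ⁻¹' M) * (1/2) := by rw [hDeq]
      _ = μ ((fun ω => Ψ (W ω)) ⁻¹' M) / 2 := by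
          rw [one_div, div_eq_mul_inv]
  -- the common conditional-expectation bound
  have hpjmeas : Measurable (fun ω => pcst ω j) := by
    have : (fun ω => pcst ω j) = fun ω => g (W ω) j := funext fun ω => hpcstg ω j
    rw [this]
    exact (measurable_pi_apply j).comp (hgmeas.comp hWmeas)
  have hhalfS : ∀ ω ∈ S, pcst ω j = 1/2 := fun ω h => hpcst_half ω j h
  have honeS : ∀ ω ∉ S, pcst ω j = 1 := fun ω h => hpcst_one ω j h
  intro α hα
  obtain ⟨hα0, hα1⟩ := hα
  constructor
  · have hm₁ : MeasurableSpace.comap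
        (fun ω => (absW ω, fun k : {k : Fin p // k ≠ j} => pcst ω k)) inferInstance
        ≤ (inferInstance : MeasurableSpace Ω) := by
      rw [hpair]
      exact (hΨmeas.comp hWmeas).comap_le
    refine aux_main hm₁ μ hpjmeas hSmeas hhalfS honeS ?_ hα0 hα1
    intro A hA
    obtain ⟨M, hM, rfl⟩ := hA
    rw [hpair]
    exact key M hM
  · have habsWmeas : Measurable absW := by
      have : absW = fun ω => Wabs (W ω) := funext habsg
      rw [this]
      exact hhAmeas.comp hWmeas
    refine aux_main habsWmeas.comap_le μ hpjmeas hSmeas hhalfS honeS ?_ hα0 hα1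
    intro A hA
    obtain ⟨B, hB, rfl⟩ := hA
    have : absW ⁻¹' B = (fun ω => Ψ (W ω)) ⁻¹' (Prod.fst ⁻¹' B) := by
      ext ω
      simp only [Set.mem_preimage]
      rw [habsg ω]
    rw [this]
    exact key _ (measurable_fst hB)
end

section
/- Let B_1, ..., B_m ∈ {0,1} be independent random variables with B_j ~ Bernoulli(ρ) for all j in a subset H0 ⊆ {1,...,m}, for some ρ ∈ (0,1). Let {F_k}_{k=1,...,m} be any filtration in reverse time (F_{k+1} ⊆ F_k) such that for every k: (1) B_j is F_k-measurable for all j ∉ H0 and for all j > k with j ∈ H0; (2) Σ_{j ≤ k, j ∈ H0} B_j is F_k-measurable; and (3) {B_j : j ≤ k, j ∈ H0} are exchangeable with respect to F_k. Then M_k := (1 + #{j ≤ k : j ∈ H0}) / (1 + Σ_{j ≤ k, j ∈ H0} B_j) is a supermartingale with respect to {F_k} (in reverse time), and E[M_m] ≤ 1/ρ. -/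
open MeasureTheory ProbabilityTheory Finset


-- sum of 0/1 valued function equals card of filter
lemma rsl_sum_eq_card {T : Finset ℕ} (f : ℕ → ℝ) (h : ∀ j ∈ T, f j = 0 ∨ f j = 1) :
    ∑ j ∈ T, f j = ((T.filter fun j => f j = 1).card : ℝ) := by
  classical
  rw [← Finset.sum_filter_add_sum_filter_not T (fun j => f j = 1)]
  have h1 : ∑ j ∈ T.filter (fun j => f j = 1), f j
      = ((T.filter fun j => f j = 1).card : ℝ) := by
    rw [Finset.sum_congr rfl (fun j hj => (Finset.mem_filter.mp hj).2)]
    simp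
  have h2 : ∑ j ∈ T.filter (fun j => ¬ f j = 1), f j = 0 := by
    refine Finset.sum_eq_zero fun j hj => ?_
    rcases h j (Finset.mem_filter.mp hj).1 with h0 | h1
    · exact h0
    · exact absurd h1 (Finset.mem_filter.mp hj).2
  rw [h1, h2, add_zero]

-- the key pointwise inequality
lemma rsl_key_ineq {T : Finset ℕ} (f : ℕ → ℝ) (h01 : ∀ j ∈ T, f j = 0 ∨ f j = 1) :
    ∑ j ∈ T, 1 / (1 + (∑ i ∈ T, f i) - f j)
      ≤ (1 + (T.card : ℝ)) / (1 + ∑ i ∈ T, f i) := by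
  classical
  set A := T.filter (fun j => f j = 1) with hA
  have hS : ∑ i ∈ T, f i = (A.card : ℝ) := rsl_sum_eq_card f h01
  set a := A.card with ha
  have hcard : A.card + (T.filter (fun j => ¬ f j = 1)).card = T.card :=
    Finset.card_filter_add_card_filter_not _
  rw [← Finset.sum_filter_add_sum_filter_not T (fun j => f j = 1)]
  have hsumA : ∑ j ∈ A, 1 / (1 + (∑ i ∈ T, f i) - f j)
      = (a : ℝ) * (1 / (a : ℝ)) := by
    rw [Finset.sum_congr rfl (fun j hj => ?_), Finset.sum_const, nsmul_eq_mul]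
    rw [hS, (Finset.mem_filter.mp hj).2]
    ring_nf
  have hsumB : ∑ j ∈ T.filter (fun j => ¬ f j = 1), 1 / (1 + (∑ i ∈ T, f i) - f j)
      = ((T.card - a : ℕ) : ℝ) * (1 / (1 + (a:ℝ))) := by
    rw [Finset.sum_congr rfl (fun j hj => ?_), Finset.sum_const, nsmul_eq_mul]
    · congr 2
      omega
    · have hf0 : f j = 0 := by
        rcases h01 j (Finset.mem_filter.mp hj).1 with h0 | h1
        · exact h0
        · exact absurd h1 (Finset.mem_filter.mp hj).2
      rw [hS, hf0]
      ring_nf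
  rw [hsumA, hsumB, hS]
  have haT : a ≤ T.card := by rw [ha, hA]; exact Finset.card_filter_le _ _
  rcases Nat.eq_zero_or_pos a with h0 | hpos
  · rw [h0]
    norm_num
  · have ha0 : (a : ℝ) ≠ 0 := Nat.cast_ne_zero.mpr hpos.ne'
    rw [mul_one_div, div_self ha0, Nat.cast_sub haT, mul_one_div]
    apply le_of_eq
    have h1a : (1:ℝ) + a ≠ 0 := by positivity
    field_simp
    ring

-- binomial recursion step
lemma rsl_binom_step (n : ℕ) (p : ℝ) (g : ℕ → ℝ) :
    ∑ s ∈ Finset.range (n+2), (((n+1).choose s : ℕ) : ℝ) * p^s * (1-p)^(n+1-s) * g s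
    = ∑ s ∈ Finset.range (n+1), ((n.choose s : ℕ) : ℝ) * p^s * (1-p)^(n-s)
        * ((1-p) * g s + p * g (s+1)) := by
  have key : ∀ s ∈ Finset.range (n+1),
      ((n.choose s : ℕ) : ℝ) * p^s * (1-p)^(n-s) * ((1-p) * g s + p * g (s+1))
      = ((n.choose s : ℕ) : ℝ) * p^s * (1-p)^(n+1-s) * g s
        + ((n.choose s : ℕ) : ℝ) * p^(s+1) * (1-p)^(n-s) * g (s+1) := by
    intro s hs
    have hsn : s ≤ n := Nat.lt_succ_iff.mp (Finset.mem_range.mp hs)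
    have : n + 1 - s = (n - s) + 1 := by omega
    rw [this, pow_succ]
    ring
  rw [Finset.sum_congr rfl key, Finset.sum_add_distrib]
  -- LHS via sum_range_succ'
  rw [Finset.sum_range_succ' (fun s => (((n+1).choose s : ℕ) : ℝ) * p^s * (1-p)^(n+1-s) * g s) (n+1)]
  have hsplit : ∀ s ∈ Finset.range (n+1),
      (((n+1).choose (s+1) : ℕ) : ℝ) * p^(s+1) * (1-p)^(n+1-(s+1)) * g (s+1)
      = ((n.choose s : ℕ) : ℝ) * p^(s+1) * (1-p)^(n-s) * g (s+1)
        + ((n.choose (s+1) : ℕ) : ℝ) * p^(s+1) * (1-p)^(n-s) * g (s+1) := by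
    intro s hs
    have h1 : (n+1).choose (s+1) = n.choose s + n.choose (s+1) := Nat.choose_succ_succ' n s
    have h2 : n + 1 - (s+1) = n - s := by omega
    rw [h1, h2]
    push_cast
    ring
  rw [Finset.sum_congr rfl hsplit, Finset.sum_add_distrib]
  -- now match terms
  have hB : ∑ s ∈ Finset.range (n+1), ((n.choose (s+1) : ℕ) : ℝ) * p^(s+1) * (1-p)^(n-s) * g (s+1)
      + (((n+1).choose 0 : ℕ) : ℝ) * p^0 * (1-p)^(n+1-0) * g 0
      = ∑ s ∈ Finset.range (n+1), ((n.choose s : ℕ) : ℝ) * p^s * (1-p)^(n+1-s) * g s := by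
    rw [Finset.sum_range_succ' (fun s => ((n.choose s : ℕ) : ℝ) * p^s * (1-p)^(n+1-s) * g s) n]
    have hlast : ∑ s ∈ Finset.range (n+1), ((n.choose (s+1) : ℕ) : ℝ) * p^(s+1) * (1-p)^(n-s) * g (s+1)
        = ∑ s ∈ Finset.range n, ((n.choose (s+1) : ℕ) : ℝ) * p^(s+1) * (1-p)^(n+1-(s+1)) * g (s+1) := by
      rw [Finset.sum_range_succ]
      have : n.choose (n+1) = 0 := Nat.choose_eq_zero_of_lt (by omega)
      rw [this]
      simp only [Nat.cast_zero, zero_mul, add_zero]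
      refine Finset.sum_congr rfl fun s hs => ?_
      have : n + 1 - (s + 1) = n - s := by omega
      rw [this]
    rw [hlast]
    simp
  linarith [hB]

-- the distribution lemma, stated standalone
theorem rsl_law
    {Ω : Type*} [mΩ : MeasurableSpace Ω] (μ : Measure Ω) [IsProbabilityMeasure μ]
    (m : ℕ) (H0 : Finset ℕ) (hH0 : H0 ⊆ Finset.Icc 1 m)
    (ρ : ℝ) (hρ0 : 0 < ρ)
    (B : ℕ → Ω → ℝ) (hBmeas : ∀ j, Measurable (B j))
    (hB01 : ∀ j ω, B j ω = 0 ∨ B j ω = 1)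
    (hBindep : iIndepFun
      (fun j : (Finset.Icc 1 m : Finset ℕ) => B j) μ)
    (hBer : ∀ j ∈ H0, μ {ω | B j ω = 1} = ENNReal.ofReal ρ) :
    ∀ T : Finset ℕ, T ⊆ H0 → ∀ g : ℕ → ℝ,
      ∫ ω, g ((T.filter fun j => B j ω = 1).card) ∂μ
      = ∑ s ∈ Finset.range (T.card + 1),
          ((T.card.choose s : ℕ) : ℝ) * ρ^s * (1-ρ)^(T.card - s) * g s := by
  classical
  have hIntBd : ∀ (f : Ω → ℝ) (C : ℝ), Measurable f → (∀ ω, |f ω| ≤ C) → Integrable f μ :=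
    fun f C hf hC => (integrable_const C).mono' hf.aestronglyMeasurable
      (Filter.Eventually.of_forall fun ω => by simpa [Real.norm_eq_abs] using hC ω)
  have hcntmeas : ∀ T : Finset ℕ, Measurable fun ω => ((T.filter fun j => B j ω = 1).card : ℕ) := by
    intro T
    have he : (fun ω => (T.filter fun j => B j ω = 1).card)
        = fun ω => ∑ j ∈ T, if B j ω = 1 then 1 else 0 := by
      funext ω; rw [Finset.card_filter]
    rw [he]
    exact Finset.measurable_sum _ fun j _ =>
      Measurable.ite (hBmeas j (measurableSet_singleton 1)) measurable_const measurable_const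
  have hIntg : ∀ (T : Finset ℕ) (g : ℕ → ℝ),
      Integrable (fun ω => g ((T.filter fun j => B j ω = 1).card)) μ := by
    intro T g
    refine hIntBd _ (∑ s ∈ Finset.range (T.card + 1), |g s|)
      ((measurable_from_top).comp (hcntmeas T)) (fun ω => ?_)
    exact Finset.single_le_sum (f := fun s => |g s|) (fun s _ => abs_nonneg _)
      (Finset.mem_range.mpr (Nat.lt_succ_of_le (Finset.card_filter_le _ _)))
  intro T
  induction T using Finset.induction_on with
  | empty =>
    intro _ g
    simp
  | @insert j T hjT ih =>
    intro hsub g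
    have hjH : j ∈ H0 := hsub (Finset.mem_insert_self j T)
    have hTH : T ⊆ H0 := fun i hi => hsub (Finset.mem_insert_of_mem hi)
    set c : Ω → ℕ := fun ω => (T.filter fun i => B i ω = 1).card with hc
    have hkey : ∀ ω, g (((insert j T).filter fun i => B i ω = 1).card)
        = g (c ω) + B j ω * (g (c ω + 1) - g (c ω)) := by
      intro ω
      rcases hB01 j ω with h0 | h1
      · have hne : ¬ (B j ω = 1) := by rw [h0]; norm_num
        rw [Finset.filter_insert, if_neg hne, h0]; ring
      · have hj' : j ∉ T.filter (fun i => B i ω = 1) := fun hmem => hjT (Finset.mem_filter.mp hmem).1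
        rw [Finset.filter_insert, if_pos h1, Finset.card_insert_of_notMem hj', h1]; ring
    have hsum : ∀ ω, ∑ i ∈ T, B i ω = (c ω : ℝ) :=
      fun ω => rsl_sum_eq_card _ (fun i _ => hB01 i ω)
    set φ : ℝ → ℝ := fun x => ∑ s ∈ Finset.range (T.card + 1),
        if x = (s:ℝ) then g (s+1) - g s else 0 with hφ
    have hφmeas : Measurable φ := by
      refine Finset.measurable_sum _ fun s _ => Measurable.ite ?_ measurable_const measurable_const
      simpa [Set.setOf_eq_eq_singleton] using measurableSet_singleton ((s:ℝ))
    have hφc : ∀ ω, φ (∑ i ∈ T, B i ω) = g (c ω + 1) - g (c ω) := by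
      intro ω
      rw [hsum ω]
      simp only [hφ]
      rw [Finset.sum_eq_single (c ω)]
      · rw [if_pos rfl]
      · intro s _ hne
        rw [if_neg]
        intro hcast
        exact hne (Nat.cast_injective hcast).symm
      · intro hmem
        exact absurd (Finset.mem_range.mpr (Nat.lt_succ_of_le (Finset.card_filter_le _ _))) hmem
    -- independence
    set s0 : Finset (Finset.Icc 1 m : Finset ℕ)
        := (Finset.Icc 1 m).attach.filter (fun x => x.1 ∈ T) with hs0
    have hjIcc : j ∈ Finset.Icc 1 m := hH0 hjH
    have hjs : (⟨j, hjIcc⟩ : (Finset.Icc 1 m : Finset ℕ)) ∉ s0 := by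
      simp [hs0, hjT]
    have hindep0 := hBindep.indepFun_finsetSum_of_notMem (fun i => hBmeas i.1) hjs
    have hsumeq : (∑ x ∈ s0, (fun i : (Finset.Icc 1 m : Finset ℕ) => B i.1) x)
        = fun ω => ∑ i ∈ T, B i ω := by
      funext ω
      rw [Finset.sum_apply, hs0, Finset.sum_filter,
        Finset.sum_attach (Finset.Icc 1 m) (fun i => if i ∈ T then B i ω else 0),
        ← Finset.sum_filter]
      congr 1
      ext i
      simp only [Finset.mem_filter, and_iff_right_iff_imp]
      exact fun hi => hH0 (hTH hi)
    rw [hsumeq] at hindep0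
    have hindep : IndepFun (B j) (fun ω => φ (∑ i ∈ T, B i ω)) μ :=
      (hindep0.symm).comp measurable_id hφmeas
    have hmul : ∫ ω, B j ω * φ (∑ i ∈ T, B i ω) ∂μ
        = (∫ ω, B j ω ∂μ) * ∫ ω, φ (∑ i ∈ T, B i ω) ∂μ :=
      hindep.integral_mul_eq_mul_integral (hBmeas j).aestronglyMeasurable
        ((hφmeas.comp (Finset.measurable_sum _ fun i _ => hBmeas i)).aestronglyMeasurable)
    have hEBj : ∫ ω, B j ω ∂μ = ρ := by
      have hset : MeasurableSet {ω | B j ω = 1} := hBmeas j (measurableSet_singleton 1)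
      have he : (fun ω => B j ω) = Set.indicator {ω | B j ω = 1} (fun _ => (1:ℝ)) := by
        funext ω
        rcases hB01 j ω with h0 | h1
        · have hmem : ω ∉ {ω' | B j ω' = 1} := by
            rw [Set.mem_setOf_eq, h0]; norm_num
          rw [Set.indicator_of_notMem hmem]
          exact h0
        · have hmem : ω ∈ {ω' | B j ω' = 1} := h1
          rw [Set.indicator_of_mem hmem]
          exact h1
      rw [he, integral_indicator_const (1:ℝ) hset, measureReal_def, hBer j hjH, smul_eq_mul, mul_one,
        ENNReal.toReal_ofReal hρ0.le]
    have hφint : Integrable (fun ω => φ (∑ i ∈ T, B i ω)) μ := by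
      have he : (fun ω => φ (∑ i ∈ T, B i ω)) = fun ω => g (c ω + 1) - g (c ω) := funext hφc
      rw [he]
      exact hIntg T (fun s => g (s+1) - g s)
    have hBjint : Integrable (B j) μ := by
      refine hIntBd _ 1 (hBmeas j) (fun ω => ?_)
      rcases hB01 j ω with h0 | h1
      · rw [h0]; norm_num
      · rw [h1]; norm_num
    have hBjφint : Integrable (fun ω => B j ω * φ (∑ i ∈ T, B i ω)) μ :=
      hindep.integrable_mul hBjint hφint
    have hdecomp : ∫ ω, g (((insert j T).filter fun i => B i ω = 1).card) ∂μ
        = (∫ ω, g (c ω) ∂μ) + ρ * ∫ ω, (g (c ω + 1) - g (c ω)) ∂μ := by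
      have e1 : (fun ω => g (((insert j T).filter fun i => B i ω = 1).card))
          = fun ω => g (c ω) + B j ω * φ (∑ i ∈ T, B i ω) := by
        funext ω; rw [hkey ω, hφc ω]
      rw [e1, integral_add (hIntg T g) hBjφint, hmul, hEBj]
      have he2 : ∫ ω, φ (∑ i ∈ T, B i ω) ∂μ = ∫ ω, (g (c ω + 1) - g (c ω)) ∂μ :=
        integral_congr_ae (Filter.Eventually.of_forall fun ω => hφc ω)
      rw [he2]
    rw [hdecomp, ih hTH g, ih hTH (fun s => g (s+1) - g s),
      Finset.card_insert_of_notMem hjT]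
    rw [rsl_binom_step T.card ρ g, Finset.mul_sum, ← Finset.sum_add_distrib]
    refine Finset.sum_congr rfl fun s _ => ?_
    ring


lemma rsl_final (n : ℕ) (ρ : ℝ) (hρ0 : 0 < ρ) (hρ1 : ρ < 1) :
    ∑ s ∈ Finset.range (n+1), ((n.choose s : ℕ):ℝ) * ρ^s * (1-ρ)^(n-s) * ((1 + (n:ℝ))/(1+(s:ℝ)))
    ≤ 1 / ρ := by
  rw [le_div_iff₀ hρ0]
  have hterm : ∀ s ∈ Finset.range (n+1),
      ((n.choose s : ℕ):ℝ) * ρ^s * (1-ρ)^(n-s) * ((1 + (n:ℝ))/(1+(s:ℝ))) * ρ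
      = (((n+1).choose (s+1) : ℕ):ℝ) * ρ^(s+1) * (1-ρ)^(n+1-(s+1)) := by
    intro s hs
    have hcast : ((n:ℝ)+1) * ((n.choose s : ℕ):ℝ) = (((n+1).choose (s+1) : ℕ):ℝ) * ((s:ℝ)+1) := by
      exact_mod_cast congrArg (Nat.cast : ℕ → ℝ) (Nat.add_one_mul_choose_eq n s)
    have h1s : (1:ℝ)+(s:ℝ) ≠ 0 := by positivity
    have h2 : n + 1 - (s+1) = n - s := by omega
    have key : ((1 + (n:ℝ))/(1+(s:ℝ))) * ((n.choose s : ℕ):ℝ) = (((n+1).choose (s+1) : ℕ):ℝ) := by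
      rw [div_mul_eq_mul_div, div_eq_iff h1s]
      linarith [hcast]
    rw [h2, pow_succ, ← key]
    ring
  rw [Finset.sum_mul, Finset.sum_congr rfl hterm]
  have hbinom : ∑ s ∈ Finset.range (n+2), (((n+1).choose s : ℕ):ℝ) * ρ^s * (1-ρ)^(n+1-s) = 1 := by
    have h := add_pow ρ (1-ρ) (n+1)
    rw [show ρ + (1-ρ) = 1 by ring, one_pow] at h
    exact (Finset.sum_congr rfl fun s _ => by ring).trans h.symm
  have h0 : 0 ≤ (((n+1).choose 0 : ℕ):ℝ) * ρ^0 * (1-ρ)^(n+1-0) := by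
    have : (0:ℝ) ≤ 1 - ρ := by linarith
    positivity
  calc ∑ s ∈ Finset.range (n+1), (((n+1).choose (s+1) : ℕ):ℝ) * ρ^(s+1) * (1-ρ)^(n+1-(s+1))
      ≤ (∑ s ∈ Finset.range (n+1), (((n+1).choose (s+1) : ℕ):ℝ) * ρ^(s+1) * (1-ρ)^(n+1-(s+1)))
        + (((n+1).choose 0 : ℕ):ℝ) * ρ^0 * (1-ρ)^(n+1-0) := le_add_of_nonneg_right h0
    _ = ∑ s ∈ Finset.range (n+2), (((n+1).choose s : ℕ):ℝ) * ρ^s * (1-ρ)^(n+1-s) :=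
        (Finset.sum_range_succ'
          (fun s => (((n+1).choose s : ℕ):ℝ) * ρ^s * (1-ρ)^(n+1-s)) (n+1)).symm
    _ = 1 := hbinom

/--
**Lemma A1 (Lemma B.3 of Li and Barber, 2017).**
Let `B_1, …, B_m ∈ {0,1}` be independent, with `B_j ~ Bernoulli(ρ)` for all `j ∈ H0`,
for some `H0 ⊆ {1,…,m}` and `ρ ∈ (0,1)`.  Let `{F_k}` be a filtration in reverse time
(`F_{k+1} ⊆ F_k`) such that for every `k`: (1) `B_j` is `F_k`-measurable for all
`j ∉ H0` and for all `j > k` with `j ∈ H0`; (2) `∑_{j ≤ k, j ∈ H0} B_j` is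
`F_k`-measurable; and (3) `{B_j : j ≤ k, j ∈ H0}` are exchangeable with respect to `F_k`.
Then `M_k = (1 + #{j ≤ k : j ∈ H0}) / (1 + ∑_{j ≤ k, j ∈ H0} B_j)` is a supermartingale
with respect to `{F_k}` in reverse time, and `E[M_m] ≤ 1/ρ`.
-/
theorem reverse_supermartingale_lemma
    {Ω : Type*} [mΩ : MeasurableSpace Ω] (μ : Measure Ω) [IsProbabilityMeasure μ]
    (m : ℕ) (H0 : Finset ℕ) (hH0 : H0 ⊆ Finset.Icc 1 m)
    (ρ : ℝ) (hρ : ρ ∈ Set.Ioo (0 : ℝ) 1)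
    (B : ℕ → Ω → ℝ) (hBmeas : ∀ j, Measurable (B j))
    (hB01 : ∀ j ω, B j ω = 0 ∨ B j ω = 1)
    -- B_1, …, B_m are independent
    (hBindep : iIndepFun
      (fun j : (Finset.Icc 1 m : Finset ℕ) => B j) μ)
    -- B_j ~ Bernoulli(ρ) for j ∈ H0
    (hBer : ∀ j ∈ H0, μ {ω | B j ω = 1} = ENNReal.ofReal ρ)
    -- the reverse-time filtration
    (F : ℕ → MeasurableSpace Ω)
    (hFle : ∀ k, F k ≤ mΩ)
    (hFrev : ∀ k, F (k + 1) ≤ F k)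
    -- (1) B_j is F_k-measurable for all j ∉ H0 and for all j > k with j ∈ H0
    (hmeas1 : ∀ k, ∀ j ∈ Finset.Icc 1 m,
      (j ∉ H0 ∨ (j ∈ H0 ∧ k < j)) → Measurable[F k] (B j))
    -- (2) ∑_{j ≤ k, j ∈ H0} B_j is F_k-measurable
    (hmeas2 : ∀ k, Measurable[F k] fun ω => ∑ j ∈ Finset.Icc 1 k ∩ H0, B j ω)
    -- (3) {B_j : j ≤ k, j ∈ H0} are exchangeable with respect to F_k
    (hexch : ∀ k, ∀ π : Equiv.Perm ℕ,
      (∀ j, j ∉ Finset.Icc 1 k ∩ H0 → π j = j) →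
      ∀ g : (ℕ → ℝ) → ℝ, Measurable g →
        (μ[(fun ω => g fun j => B j ω) | F k])
          =ᵐ[μ] (μ[(fun ω => g fun j => B (π j) ω) | F k]))
    -- the process M_k
    (M : ℕ → Ω → ℝ)
    (hM : ∀ k ω, M k ω
      = (1 + ((Finset.Icc 1 k ∩ H0).card : ℝ))
        / (1 + ∑ j ∈ Finset.Icc 1 k ∩ H0, B j ω)) :
    -- M is a reverse-time supermartingale and E[M_m] ≤ 1/ρ
    (∀ k, 1 ≤ k → k ≤ m → (μ[M (k - 1) | F k]) ≤ᵐ[μ] M k) ∧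
    ∫ ω, M m ω ∂μ ≤ 1 / ρ := by
  classical
  obtain ⟨hρ0, hρ1⟩ := hρ
  have hB0 : ∀ j ω, 0 ≤ B j ω := by
    intro j ω; rcases hB01 j ω with h | h <;> rw [h] <;> norm_num
  have hB1 : ∀ j ω, B j ω ≤ 1 := by
    intro j ω; rcases hB01 j ω with h | h <;> rw [h] <;> norm_num
  have hIntBd : ∀ (f : Ω → ℝ) (C : ℝ), Measurable f → (∀ ω, |f ω| ≤ C) → Integrable f μ :=
    fun f C hf hC => (integrable_const C).mono' hf.aestronglyMeasurable
      (Filter.Eventually.of_forall fun ω => by simpa [Real.norm_eq_abs] using hC ω)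
  constructor
  · -- Part 1: reverse-time supermartingale property
    intro k hk1 hkm
    haveI : SigmaFinite (μ.trim (hFle k)) := inferInstance
    set T : Finset ℕ := Finset.Icc 1 k ∩ H0 with hTdef
    have hT'e : Finset.Icc 1 (k-1) ∩ H0 = T.erase k := by
      rw [hTdef]
      ext i
      simp only [Finset.mem_inter, Finset.mem_Icc, Finset.mem_erase]
      constructor
      · rintro ⟨⟨h1, h2⟩, h3⟩
        exact ⟨by omega, ⟨h1, by omega⟩, h3⟩
      · rintro ⟨hne, ⟨h1, h2⟩, h3⟩
        exact ⟨⟨h1, by omega⟩, h3⟩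
    -- measurability and integrability of M k
    have hSnn : ∀ ω, 0 ≤ ∑ j ∈ T, B j ω := fun ω => Finset.sum_nonneg fun j _ => hB0 j ω
    have hMkfun : M k = fun ω => (1 + (T.card : ℝ)) / (1 + ∑ j ∈ T, B j ω) := by
      funext ω; rw [hM, hTdef]
    have hMkmeasFk : StronglyMeasurable[F k] (M k) := by
      have h1 : Measurable[F k] fun ω => (1 + (T.card : ℝ)) / (1 + ∑ j ∈ T, B j ω) :=
        Measurable.div measurable_const
          (Measurable.add measurable_const (by rw [hTdef]; exact hmeas2 k))
      rw [hMkfun]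
      exact h1.stronglyMeasurable
    have hMkbd : ∀ ω, |M k ω| ≤ 1 + (T.card : ℝ) := by
      intro ω
      rw [hMkfun]
      have h1 : (0:ℝ) ≤ 1 + ∑ j ∈ T, B j ω := by linarith [hSnn ω]
      have h2 : (0:ℝ) ≤ 1 + (T.card : ℝ) := by positivity
      rw [abs_of_nonneg (by positivity)]
      exact div_le_self h2 (by linarith [hSnn ω])
    have hMkint : Integrable (M k) μ := by
      refine hIntBd _ (1 + (T.card : ℝ)) ?_ hMkbd
      rw [hMkfun]
      exact Measurable.div measurable_const
        (Measurable.add measurable_const (Finset.measurable_sum T fun i _ => hBmeas i))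
    have hMkcond : μ[M k | F k] = M k :=
      condExp_of_stronglyMeasurable (hFle k) hMkmeasFk hMkint
    by_cases hkH : k ∈ H0
    · -- main case : k ∈ H0
      have hkT : k ∈ T := by
        rw [hTdef]
        exact Finset.mem_inter.mpr ⟨Finset.mem_Icc.mpr ⟨hk1, le_refl k⟩, hkH⟩
      have hn1 : 1 ≤ T.card := Finset.card_pos.mpr ⟨k, hkT⟩
      set h : ℕ → Ω → ℝ := fun j ω => 1 / (1 + (∑ i ∈ T, B i ω) - B j ω) with hhdef
      have hden : ∀ j ∈ T, ∀ ω, 1 ≤ 1 + (∑ i ∈ T, B i ω) - B j ω := by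
        intro j hj ω
        have hle : B j ω ≤ ∑ i ∈ T, B i ω :=
          Finset.single_le_sum (fun i _ => hB0 i ω) hj
        linarith
      have hhbd : ∀ j ∈ T, ∀ ω, |h j ω| ≤ 1 := by
        intro j hj ω
        have h1 := hden j hj ω
        rw [hhdef]
        simp only
        rw [abs_of_nonneg (by positivity), div_le_one (by linarith)]
        linarith
      have hhmeas : ∀ j, Measurable (h j) := fun j =>
        Measurable.div measurable_const
          ((Measurable.add measurable_const
            (Finset.measurable_sum T fun i _ => hBmeas i)).sub (hBmeas j))
      have hhint : ∀ j ∈ T, Integrable (h j) μ := fun j hj => hIntBd _ 1 (hhmeas j) (hhbd j hj)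
      -- M (k-1) = card T • h k
      have hMk1 : M (k-1) = fun ω => (T.card : ℝ) * h k ω := by
        funext ω
        rw [hM, hT'e]
        have hden' : ∑ i ∈ T.erase k, B i ω = (∑ i ∈ T, B i ω) - B k ω := by
          have hh := Finset.add_sum_erase T (fun i => B i ω) hkT
          linarith [hh]
        rw [hden', Finset.card_erase_of_mem hkT, Nat.cast_sub hn1, hhdef]
        simp only [Nat.cast_one]
        ring
      -- Step 1 : exchangeability
      have hswap : ∀ j ∈ T, (μ[h k | F k]) =ᵐ[μ] (μ[h j | F k]) := by
        intro j hjT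
        set π : Equiv.Perm ℕ := Equiv.swap k j with hπdef
        have hπfix : ∀ i, i ∉ Finset.Icc 1 k ∩ H0 → π i = i := by
          intro i hi
          rw [← hTdef] at hi
          refine Equiv.swap_apply_of_ne_of_ne ?_ ?_
          · rintro rfl; exact hi hkT
          · rintro rfl; exact hi hjT
        set g : (ℕ → ℝ) → ℝ := fun b => 1 / (1 + (∑ i ∈ T, b i) - b k) with hgdef
        have hgmeas : Measurable g :=
          Measurable.div measurable_const
            ((Measurable.add measurable_const
              (Finset.measurable_sum T fun i _ => measurable_pi_apply i)).sub
              (measurable_pi_apply k))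
        have hex := hexch k π hπfix g hgmeas
        have e1 : (fun ω => g fun i => B i ω) = h k := rfl
        have e2 : (fun ω => g fun i => B (π i) ω) = h j := by
          funext ω
          simp only [hgdef, hhdef]
          have hsum : ∑ i ∈ T, B (π i) ω = ∑ i ∈ T, B i ω := by
            refine Equiv.Perm.sum_comp π T (fun i => B i ω) ?_
            intro a ha
            simp only [Set.mem_setOf_eq] at ha
            by_contra haT
            rw [hTdef] at haT
            exact ha (hπfix a (by simpa using haT))
          rw [hsum, hπdef, Equiv.swap_apply_left]
        rwa [e1, e2] at hex
      -- Step 2 : condexp of M (k-1) equals condexp of the symmetrized sum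
      have hMcond : μ[M (k-1) | F k] =ᵐ[μ] (T.card : ℝ) • μ[h k | F k] := by
        have he : M (k-1) = (T.card : ℝ) • h k := by
          rw [hMk1]; funext ω; simp
        rw [he]
        exact condExp_smul _ _ _
      have hsum1 : μ[fun ω => ∑ j ∈ T, h j ω | F k] =ᵐ[μ] (T.card : ℝ) • μ[h k | F k] := by
        have h1 : (fun ω => ∑ j ∈ T, h j ω) = ∑ j ∈ T, h j := by
          funext ω; rw [Finset.sum_apply]
        rw [h1]
        refine (condExp_finsetSum hhint (F k)).trans ?_
        have hae : ∀ᵐ ω ∂μ, ∀ j ∈ T, (μ[h j | F k]) ω = (μ[h k | F k]) ω := by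
          rw [Filter.eventually_all_finset]
          intro j hj
          exact (hswap j hj).symm
        filter_upwards [hae] with ω hω
        rw [Finset.sum_apply, Finset.sum_congr rfl (fun j hj => hω j hj)]
        simp [Finset.sum_const]
      -- Step 3 : pointwise inequality
      have hpt : ∀ ω, (∑ j ∈ T, h j ω) ≤ M k ω := by
        intro ω
        rw [hMkfun]
        exact rsl_key_ineq (fun i => B i ω) (fun i _ => hB01 i ω)
      -- Step 4 : conclude
      have hsumint : Integrable (fun ω => ∑ j ∈ T, h j ω) μ :=
        integrable_finset_sum T hhint
      have hmono : μ[fun ω => ∑ j ∈ T, h j ω | F k] ≤ᵐ[μ] μ[M k | F k] :=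
        condExp_mono hsumint hMkint (Filter.Eventually.of_forall hpt)
      rw [hMkcond] at hmono
      exact (hMcond.trans hsum1.symm).trans_le hmono
    · -- easy case : k ∉ H0
      have hkT : k ∉ T := by
        rw [hTdef]
        intro hmem
        exact hkH (Finset.mem_inter.mp hmem).2
      have heq : M (k-1) = M k := by
        funext ω
        rw [hM, hM, ← hTdef, hT'e, Finset.erase_eq_of_notMem hkT]
      rw [heq, hMkcond]
  · -- Part 2 : E[M m] ≤ 1/ρ
    have hH0eq : Finset.Icc 1 m ∩ H0 = H0 := Finset.inter_eq_right.mpr hH0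
    have hval := rsl_law μ m H0 hH0 ρ hρ0 B hBmeas hB01 hBindep hBer H0 Finset.Subset.rfl
      (fun s => (1 + (H0.card:ℝ))/(1+(s:ℝ)))
    calc ∫ ω, M m ω ∂μ
        = ∑ s ∈ Finset.range (H0.card+1), ((H0.card.choose s : ℕ):ℝ) * ρ^s
            * (1-ρ)^(H0.card-s) * ((1 + (H0.card:ℝ))/(1+(s:ℝ))) := by
          rw [← hval]
          refine integral_congr_ae (Filter.Eventually.of_forall fun ω => ?_)
          rw [hM, hH0eq, rsl_sum_eq_card (fun i => B i ω) (fun i _ => hB01 i ω)]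
      _ ≤ 1/ρ := rsl_final H0.card ρ hρ0 hρ1
end
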